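/- arXiv:1207.2829 — 9 statements merged into one kernel-verified Lean document; each statement's English description precedes it below -/
import Mathlib

section
/- Let n, k, t be positive integers with t = ⌊(n+1)/(k+1)⌋. Define the (n+1−t) × n matrix A whose i-th row has ones in columns i through i+t−1 and zeros elsewhere. Then for every nonzero w ∈ ℝⁿ with A w = 0 and every index set T ⊆ {1,…,n} with |T| ≤ k, we have ‖w_T‖₁ < ‖w‖₁ / 2, where w_T is the restriction of w to indices in T. -/
/-!
A null vector of the sliding-window matrix has all window sums of length `t` equal to zero, so
it is `t`-periodic and each period `w₀, …, w_{t-1}` sums to zero. Writing `P` for the `ℓ₁`-mass of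
one period, every entry then satisfies `2 |w_j| ≤ P`, so `2 ‖w_T‖₁ ≤ k P`. On the other hand
`(k + 1) t ≤ n + 1` means that `w` contains `k` full periods followed by at least `t - 1` further
entries, whence `‖w‖₁ ≥ k P + P / 2`. Since `w ≠ 0` forces `P > 0`, the inequality is strict.
-/

open Finset

theorem Matrix.mulVec_apply_eq_sum_Ico_extend {R : Type*} [Semiring R] {m n t : ℕ}
    (A : Matrix (Fin m) (Fin n) R)
    (hA : ∀ i j, A i j = if i.val ≤ j.val ∧ j.val < i.val + t then 1 else 0)
    (w : Fin n → R) (i : Fin m) (hi : i.val + t ≤ n) :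
    A.mulVec w i = ∑ j ∈ Ico i.val (i.val + t), Function.extend Fin.val w 0 j := by
  have hwin : ({j ∈ range n | i.val ≤ j ∧ j < i.val + t} : Finset ℕ) = Ico i.val (i.val + t) := by
    ext j
    simp only [mem_filter, mem_range, mem_Ico]
    omega
  rw [← hwin, sum_filter, ← Fin.sum_univ_eq_sum_range]
  simp only [Matrix.mulVec, dotProduct, hA, ite_mul, one_mul, zero_mul,
    Fin.val_injective.extend_apply]

theorem add_eq_self_of_sum_Ico_eq_zero {M : Type*} [AddCommGroup M] {v : ℕ → M} {n t : ℕ}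
    (h : ∀ i, i + t ≤ n → ∑ j ∈ Ico i (i + t), v j = 0) {i : ℕ} (hi : i + t < n) :
    v (i + t) = v i := by
  have hsplit := sum_Ico_succ_top (Nat.le_add_right i t) v
  rw [sum_eq_sum_Ico_succ_bot (by omega), add_right_comm, h i hi.le,
    h (i + 1) (by omega), zero_add, add_zero] at hsplit
  exact hsplit.symm

theorem apply_mod_eq_of_add_eq {α : Type*} {v : ℕ → α} {n t : ℕ}
    (h : ∀ i, i + t < n → v (i + t) = v i) {j : ℕ} (hj : j < n) : v (j % t) = v j := by
  rcases t.eq_zero_or_pos with rfl | ht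
  · rw [Nat.mod_zero]
  induction j using Nat.strong_induction_on with
  | _ j ih =>
    rcases lt_or_ge j t with hjt | hjt
    · rw [Nat.mod_eq_of_lt hjt]
    · obtain ⟨i, rfl⟩ := Nat.exists_eq_add_of_le' hjt
      rw [Nat.add_mod_right, ih i (by omega) (by omega), h i hj]

theorem two_mul_abs_le_sum_abs_of_sum_eq_zero {ι R : Type*} [Ring R] [LinearOrder R]
    [IsOrderedRing R] {s : Finset ι} {f : ι → R} (hs : ∑ i ∈ s, f i = 0) {i : ι} (hi : i ∈ s) :
    2 * |f i| ≤ ∑ j ∈ s, |f j| := by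
  classical
  rw [← add_sum_erase s (fun j => |f j|) hi, two_mul, add_le_add_iff_left]
  rw [← add_sum_erase s f hi, add_eq_zero_iff_eq_neg] at hs
  rw [hs, abs_neg]
  exact abs_sum_le_sum_abs f _

theorem sum_range_mul_add_mod {M : Type*} [AddCommMonoid M] (g : ℕ → M) (k t : ℕ) {s : ℕ}
    (hs : s ≤ t) :
    ∑ j ∈ range (k * t + s), g (j % t) = k • ∑ j ∈ range t, g j + ∑ j ∈ range s, g j := by
  induction k with
  | zero =>
    simp only [zero_mul, zero_add, zero_smul]
    exact sum_congr rfl fun j hj => by rw [Nat.mod_eq_of_lt (by simp at hj; omega)]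
  | succ k ih =>
    rw [add_mul, one_mul, add_comm (k * t), add_assoc, sum_range_add]
    simp only [Nat.add_mod_left]
    rw [ih, succ_nsmul', add_assoc]
    congr 1
    exact sum_congr rfl fun j hj => by rw [Nat.mod_eq_of_lt (mem_range.1 hj)]

theorem mul_add_half_le_sum_range_mod {g : ℕ → ℝ} {n k t : ℕ} (hg : ∀ j, 0 ≤ g j)
    (hhalf : ∀ r < t, 2 * g r ≤ ∑ j ∈ range t, g j) (ht : 0 < t) (hn : k * t + t ≤ n + 1) :
    k * ∑ j ∈ range t, g j + (∑ j ∈ range t, g j) / 2 ≤ ∑ j ∈ range n, g (j % t) := by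
  have hlast := sum_range_succ g (t - 1)
  rw [Nat.sub_add_cancel ht] at hlast
  calc k * ∑ j ∈ range t, g j + (∑ j ∈ range t, g j) / 2
      ≤ k * ∑ j ∈ range t, g j + ∑ j ∈ range (t - 1), g j := by
        linarith [hhalf (t - 1) (by omega)]
    _ = ∑ j ∈ range (k * t + (t - 1)), g (j % t) := by
        rw [sum_range_mul_add_mod g k t (by omega), nsmul_eq_mul]
    _ ≤ ∑ j ∈ range n, g (j % t) :=
        sum_le_sum_of_subset_of_nonneg (range_subset_range.2 (by omega)) fun j _ _ => hg _

theorem stmt_1_general (n k t : ℕ) (hk : 0 < k) (ht0 : 0 < t)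
    (ht : t = (n + 1) / (k + 1))
    (A : Matrix (Fin (n + 1 - t)) (Fin n) ℝ)
    (hA : ∀ i j, A i j = if i.val ≤ j.val ∧ j.val < i.val + t then 1 else 0)
    (w : Fin n → ℝ) (hw : w ≠ 0) (hAw : A.mulVec w = 0) :
    ∀ T : Finset (Fin n), T.card ≤ k →
      ∑ j ∈ T, |w j| < (∑ j, |w j|) / 2 := by
  intro T hT
  have hkt : k * t + t ≤ n + 1 := by
    rw [ht]; linarith [Nat.div_mul_le_self (n + 1) (k + 1)]
  set v : ℕ → ℝ := Function.extend Fin.val w 0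
  have hwin (i : ℕ) (hi : i + t ≤ n) : ∑ j ∈ Ico i (i + t), v j = 0 := by
    rw [← A.mulVec_apply_eq_sum_Ico_extend hA w ⟨i, by omega⟩ hi, hAw, Pi.zero_apply]
  have hmod (j : Fin n) : v (j % t) = w j :=
    (apply_mod_eq_of_add_eq (fun i hi => add_eq_self_of_sum_Ico_eq_zero hwin hi) j.isLt).trans
      (Fin.val_injective.extend_apply w 0 j)
  set P := ∑ r ∈ range t, |v r|
  have hhalf (r : ℕ) (hr : r < t) : 2 * |v r| ≤ P := by
    refine two_mul_abs_le_sum_abs_of_sum_eq_zero ?_ (mem_range.2 hr)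
    rw [range_eq_Ico, ← zero_add t]
    exact hwin 0 (by nlinarith)
  have hwhalf (j : Fin n) : 2 * |w j| ≤ P := hmod j ▸ hhalf _ (Nat.mod_lt _ ht0)
  have hP : 0 < P := by
    obtain ⟨j, hj⟩ := Function.ne_iff.1 hw
    linarith [abs_pos.2 hj, hwhalf j]
  have hT2 : 2 * ∑ j ∈ T, |w j| ≤ T.card * P := by
    rw [mul_sum, ← nsmul_eq_mul]
    exact sum_le_card_nsmul _ _ _ fun j _ => hwhalf j
  have htotal : ∑ j, |w j| = ∑ j ∈ range n, |v (j % t)| := by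
    rw [← Fin.sum_univ_eq_sum_range (fun j => |v (j % t)|)]
    simp only [hmod]
  have hlow := mul_add_half_le_sum_range_mod (fun j => abs_nonneg (v j)) hhalf ht0 hkt
  have hTP : (T.card : ℝ) * P ≤ k * P := by gcongr
  linarith

/-- Null space property of the sliding-window line-graph measurement matrix:
for every nonzero null vector `w` and every index set `T` of size at most `k`,
`‖w_T‖₁ < ‖w‖₁ / 2`. -/
theorem stmt_1 (n k t : ℕ) (hn : 0 < n) (hk : 0 < k) (ht0 : 0 < t)
    (ht : t = (n + 1) / (k + 1))
    (A : Matrix (Fin (n + 1 - t)) (Fin n) ℝ)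
    (hA : ∀ i j, A i j = if i.val ≤ j.val ∧ j.val < i.val + t then 1 else 0)
    (w : Fin n → ℝ) (hw : w ≠ 0) (hAw : A.mulVec w = 0) :
    ∀ T : Finset (Fin n), T.card ≤ k →
      ∑ j ∈ T, |w j| < (∑ j, |w j|) / 2 :=
  stmt_1_general n k t hk ht0 ht A hA w hw hAw
end

section
/- Let k ≥ 2 and n be positive integers, t = ⌈n/(2k)⌉ ≥ 2. Define D^k as the 2k × 2k lower bidiagonal 0-1 matrix with ones on the main diagonal and subdiagonal. Construct the (2kt−t+1) × 2kt matrix A by placing copies of D^k in blocks: for i = 1,…,t, the submatrix of A with rows {(i−1)(2k−1)+1, …, i(2k−1)+1} and columns {2k(i−1)+1, …, 2ki} equals D^k, with all other entries zero. Then every nonzero vector z ∈ ℝ^{2kt} with A z = 0 has at least 2k+1 nonzero entries. -/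
open Finset Matrix

/-!
Extend `z` by zero to `Z : ℕ → ℝ` and write columns as `L * b + j` with `L = 2k`, `j < L`.
Row `0` says `Z 0 = 0`; the rows inside block `b` say `Z (L b + j + 1) = -Z (L b + j)` for
`j + 2 < L`, so the first `L - 1` entries of a block are `± Z (L b)`; the row shared by blocks
`b` and `b + 1` says `Z (L b + L - 1) + Z (L b + L - 2) + Z (L (b + 1)) = 0`, and since `Z`
vanishes from `L t` on, this also holds for the last block.
Consequently the first nonzero entry of `Z` is the last entry of its block `b`. The shared row
then makes `Z (L (b + 1))`, hence the first `L - 1` entries of block `b + 1`, nonzero, and the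
next shared row produces a further nonzero entry at or after `L (b + 1) + L - 1`.
-/

structure IsBlockBidiagNull (L : ℕ) (Z : ℕ → ℝ) : Prop where
  head : Z 0 = 0
  inner : ∀ b j, j + 2 < L → Z (L * b + (j + 1)) + Z (L * b + j) = 0
  junction : ∀ b, Z (L * b + (L - 1)) + Z (L * b + (L - 2)) + Z (L * (b + 1)) = 0

namespace IsBlockBidiagNull

variable {L : ℕ} {Z : ℕ → ℝ}

theorem apply_mul_add (hZ : IsBlockBidiagNull L Z) (b : ℕ) {j : ℕ} (hj : j + 1 < L) :
    Z (L * b + j) = (-1) ^ j * Z (L * b) := by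
  induction j with
  | zero => simp
  | succ j ih => linear_combination hZ.inner b j hj - ih (by omega)

theorem apply_mul_eq_zero (hZ : IsBlockBidiagNull L Z) (hL : 0 < L) {b : ℕ}
    (h : ∀ c < L * b, Z c = 0) : Z (L * b) = 0 := by
  cases b with
  | zero => simpa using hZ.head
  | succ b =>
    have hb := hZ.junction b
    rw [h _ (by rw [mul_add]; omega), h _ (by rw [mul_add]; omega)] at hb
    simpa using hb

theorem exists_le_apply_ne_zero (hZ : IsBlockBidiagNull L Z) (hL : 2 ≤ L) {b : ℕ}
    (h : Z (L * b) ≠ 0) : ∃ e, L * b + (L - 1) ≤ e ∧ Z e ≠ 0 := by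
  by_cases hlast : Z (L * b + (L - 1)) = 0
  · refine ⟨L * (b + 1), by rw [mul_add]; omega, fun hnext => h ?_⟩
    have hb := hZ.junction b
    rw [hlast, hnext, hZ.apply_mul_add b (j := L - 2) (by omega)] at hb
    simpa using hb
  · exact ⟨_, le_rfl, hlast⟩

theorem exists_card_eq_subset_support (hZ : IsBlockBidiagNull L Z) (hL : 2 ≤ L)
    (hne : Z ≠ 0) : ∃ S : Finset ℕ, S.card = L + 1 ∧ ↑S ⊆ Function.support Z := by
  classical
  obtain ⟨c₀, hc₀, hmin⟩ : ∃ c₀, Z c₀ ≠ 0 ∧ ∀ c < c₀, Z c = 0 := by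
    have hex : ∃ c, Z c ≠ 0 := Function.ne_iff.mp hne
    exact ⟨Nat.find hex, Nat.find_spec hex, fun c hc => not_not.mp (Nat.find_min hex hc)⟩
  obtain ⟨b, hb⟩ : ∃ b, c₀ = L * b + (L - 1) := by
    have hhead : Z (L * (c₀ / L)) = 0 :=
      hZ.apply_mul_eq_zero (by omega) fun c hc => hmin c (hc.trans_le (Nat.mul_div_le c₀ L))
    refine ⟨c₀ / L, ?_⟩
    by_contra hlast
    have hmod : c₀ % L + 1 < L := by
      have := Nat.mod_lt c₀ (by omega : 0 < L)
      have := Nat.div_add_mod c₀ L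
      omega
    apply hc₀
    rw [← Nat.div_add_mod c₀ L, hZ.apply_mul_add _ hmod, hhead, mul_zero]
  have hnext : Z (L * (b + 1)) ≠ 0 := by
    intro hzero
    have hb' := hZ.junction b
    rw [← hb, hmin (L * b + (L - 2)) (by omega), hzero] at hb'
    exact hc₀ (by linarith)
  obtain ⟨e, he, hze⟩ := hZ.exists_le_apply_ne_zero hL hnext
  have hshift : ∀ j, c₀ + (j + 1) = L * (b + 1) + j := fun j => by rw [hb, mul_add]; omega
  refine ⟨insert e ((range L).image (c₀ + ·)), ?_, ?_⟩
  · rw [card_insert_of_notMem, card_image_of_injective _ (add_right_injective c₀), card_range]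
    simp only [mem_image, mem_range, not_exists, not_and]
    intro j hj
    have := hshift (L - 1)
    omega
  · intro c hc
    simp only [coe_insert, coe_image, coe_range, Set.mem_insert_iff, Set.mem_image,
      Set.mem_Iio] at hc
    rcases hc with rfl | ⟨_ | j, hj, rfl⟩
    · exact hze
    · exact hc₀
    · rw [Function.mem_support, hshift, hZ.apply_mul_add _ (by omega)]
      exact mul_ne_zero (pow_ne_zero _ (by norm_num)) hnext

end IsBlockBidiagNull

theorem mul_add_eq_mul_add_iff_of_lt {m q s b j : ℕ} (hs : s < m) (hj : j < m) :
    m * q + s = m * b + j ↔ q = b ∧ s = j := by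
  refine ⟨fun h => ?_, by rintro ⟨rfl, rfl⟩; rfl⟩
  have hm : 0 < m := by omega
  obtain ⟨hq, hs'⟩ := (Nat.div_mod_unique hm).2 ⟨add_comm s (m * q), hs⟩
  obtain ⟨hb, hj'⟩ := (Nat.div_mod_unique hm).2 ⟨add_comm j (m * b), hj⟩
  rw [h] at hq hs'
  exact ⟨hq.symm.trans hb, hs'.symm.trans hj'⟩

theorem mul_add_eq_mul_add_iff_of_le {m q s b j : ℕ} (hs : s ≤ m) (hj : j < m) :
    q * m + s = b * m + j ↔ (q = b ∧ s = j) ∨ (q + 1 = b ∧ s = m ∧ j = 0) := by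
  rw [mul_comm q, mul_comm b]
  rcases hs.lt_or_eq with hs | rfl
  · rw [mul_add_eq_mul_add_iff_of_lt hs hj]
    omega
  · rw [← mul_add_one, ← add_zero (s * (q + 1)), mul_add_eq_mul_add_iff_of_lt (by omega) hj]
    omega

theorem exists_mul_add_eq {L : ℕ} (hL : 0 < L) (c : ℕ) : ∃ q s, s < L ∧ L * q + s = c :=
  ⟨c / L, c % L, Nat.mod_lt c hL, Nat.div_add_mod c L⟩

theorem extend_val_apply_of_le {M : Type*} [Zero M] {n c : ℕ} (z : Fin n → M) (hc : n ≤ c) :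
    Function.extend Fin.val z 0 c = 0 :=
  Function.extend_apply' _ _ _ (by rintro ⟨a, rfl⟩; omega)

abbrev IsBlockBidiagEntry (L r c : ℕ) : Prop :=
  r = c / L * (L - 1) + c % L ∨ (c % L < L - 1 ∧ r = c / L * (L - 1) + c % L + 1)

/-- Column `L * q + s` with `s < L` is column `s` of the `q`-th copy of the `L × L` lower
bidiagonal block, whose rows start at row `q * (L - 1)`. -/
def blockBidiag (L t : ℕ) : Matrix (Fin (L * t - t + 1)) (Fin (L * t)) ℝ :=
  Matrix.of fun r c => if IsBlockBidiagEntry L r c then 1 else 0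

section BlockBidiagEntry

variable {L : ℕ}

theorem isBlockBidiagEntry_mul_add_iff {r q s : ℕ} (hs : s < L) :
    IsBlockBidiagEntry L r (L * q + s) ↔
      r = q * (L - 1) + s ∨ (s < L - 1 ∧ r = q * (L - 1) + (s + 1)) := by
  rw [IsBlockBidiagEntry, Nat.mul_add_div (by omega), Nat.div_eq_of_lt hs, add_zero,
    Nat.mul_add_mod, Nat.mod_eq_of_lt hs, add_assoc]

theorem isBlockBidiagEntry_iff {b j q s : ℕ} (hj : j < L - 1) (hs : s < L) :
    IsBlockBidiagEntry L (b * (L - 1) + j) (L * q + s) ↔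
      ((q = b ∧ s = j) ∨ (q + 1 = b ∧ s = L - 1 ∧ j = 0)) ∨
        (s < L - 1 ∧ ((q = b ∧ s + 1 = j) ∨ (q + 1 = b ∧ s + 1 = L - 1 ∧ j = 0))) := by
  rw [isBlockBidiagEntry_mul_add_iff hs, eq_comm, mul_add_eq_mul_add_iff_of_le (by omega) hj]
  refine or_congr_right (and_congr_right fun hs' => ?_)
  rw [eq_comm, mul_add_eq_mul_add_iff_of_le hs' hj]

theorem isBlockBidiagEntry_zero_iff (hL : 2 ≤ L) (c : ℕ) :
    IsBlockBidiagEntry L 0 c ↔ c ∈ ({0} : Finset ℕ) := by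
  obtain ⟨q, s, hs, rfl⟩ := exists_mul_add_eq (by omega : 0 < L) c
  have h := isBlockBidiagEntry_iff (b := 0) (q := q) (by omega : 0 < L - 1) hs
  rw [zero_mul, add_zero] at h
  have hc := mul_add_eq_mul_add_iff_of_lt (q := q) (b := 0) hs (by omega : 0 < L)
  rw [mul_zero, add_zero] at hc
  rw [h, mem_singleton, hc]
  omega

theorem isBlockBidiagEntry_inner_iff (b : ℕ) {j : ℕ} (hj : j + 2 < L) (c : ℕ) :
    IsBlockBidiagEntry L (b * (L - 1) + (j + 1)) c ↔
      c ∈ ({L * b + (j + 1), L * b + j} : Finset ℕ) := by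
  obtain ⟨q, s, hs, rfl⟩ := exists_mul_add_eq (by omega : 0 < L) c
  rw [isBlockBidiagEntry_iff (by omega) hs, mem_insert, mem_singleton,
    mul_add_eq_mul_add_iff_of_lt hs (by omega), mul_add_eq_mul_add_iff_of_lt hs (by omega)]
  omega

theorem isBlockBidiagEntry_junction_iff (hL : 2 ≤ L) (b c : ℕ) :
    IsBlockBidiagEntry L ((b + 1) * (L - 1) + 0) c ↔
      c ∈ ({L * b + (L - 1), L * b + (L - 2), L * (b + 1) + 0} : Finset ℕ) := by
  obtain ⟨q, s, hs, rfl⟩ := exists_mul_add_eq (by omega : 0 < L) c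
  rw [isBlockBidiagEntry_iff (by omega) hs, mem_insert, mem_insert, mem_singleton,
    mul_add_eq_mul_add_iff_of_lt hs (by omega), mul_add_eq_mul_add_iff_of_lt hs (by omega),
    mul_add_eq_mul_add_iff_of_lt hs (by omega)]
  omega

theorem lt_of_isBlockBidiagEntry {t r c : ℕ} (hc : c < L * t) (h : IsBlockBidiagEntry L r c) :
    r < L * t - t + 1 := by
  have hs : c % L < L := Nat.mod_lt c (Nat.pos_of_ne_zero (by rintro rfl; simp at hc))
  have hq : (c / L + 1) * (L - 1) ≤ t * (L - 1) :=
    Nat.mul_le_mul_right _ (Nat.div_lt_of_lt_mul hc)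
  have ht : t * (L - 1) = L * t - t := by rw [Nat.mul_sub_one, mul_comm]
  rw [add_one_mul] at hq
  omega

end BlockBidiagEntry

section BlockBidiagKernel

variable {L t : ℕ} {z : Fin (L * t) → ℝ}

theorem blockBidiag_mulVec_apply (r : Fin (L * t - t + 1)) {S : Finset ℕ}
    (hS : ∀ c, IsBlockBidiagEntry L r c ↔ c ∈ S) :
    (blockBidiag L t *ᵥ z) r = ∑ c ∈ S, Function.extend Fin.val z 0 c := by
  classical
  have hz : ∀ c : Fin (L * t), z c = Function.extend Fin.val z 0 c := fun c =>
    (Fin.val_injective.extend_apply z 0 c).symm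
  calc (blockBidiag L t *ᵥ z) r
      = ∑ c : Fin (L * t), if (c : ℕ) ∈ S then Function.extend Fin.val z 0 c else 0 := by
        simp only [Matrix.mulVec, dotProduct, blockBidiag, Matrix.of_apply, ite_mul, one_mul,
          zero_mul, hS, ← hz]
    _ = ∑ c ∈ range (L * t) ∩ S, Function.extend Fin.val z 0 c := by
        rw [Fin.sum_univ_eq_sum_range
          (fun c => if c ∈ S then Function.extend Fin.val z 0 c else 0), sum_ite_mem]
    _ = ∑ c ∈ S, Function.extend Fin.val z 0 c :=
        sum_subset inter_subset_right fun c hcS hc =>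
          extend_val_apply_of_le z (by simpa [hcS] using hc)

theorem sum_extend_val_eq_zero (h : blockBidiag L t *ᵥ z = 0) (r : ℕ) {S : Finset ℕ}
    (hS : ∀ c, IsBlockBidiagEntry L r c ↔ c ∈ S) :
    ∑ c ∈ S, Function.extend Fin.val z 0 c = 0 := by
  by_cases hr : r < L * t - t + 1
  · rw [← blockBidiag_mulVec_apply ⟨r, hr⟩ hS, h, Pi.zero_apply]
  · exact sum_eq_zero fun c hc => extend_val_apply_of_le z
      (not_lt.1 fun hc' => hr (lt_of_isBlockBidiagEntry hc' ((hS c).2 hc)))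

theorem isBlockBidiagNull_extend_val (hL : 2 ≤ L) (h : blockBidiag L t *ᵥ z = 0) :
    IsBlockBidiagNull L (Function.extend Fin.val z 0) where
  head := by simpa using sum_extend_val_eq_zero h 0 (isBlockBidiagEntry_zero_iff hL)
  inner b j hj := by
    have hrow := sum_extend_val_eq_zero h _ (isBlockBidiagEntry_inner_iff b hj)
    rwa [sum_pair (by omega)] at hrow
  junction b := by
    have hrow := sum_extend_val_eq_zero h _ (isBlockBidiagEntry_junction_iff hL b)
    have hnext : L * (b + 1) = L * b + L := mul_add_one L b
    rwa [sum_insert (by simp only [mem_insert, mem_singleton]; omega), sum_pair (by omega),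
      ← add_assoc, add_zero] at hrow

end BlockBidiagKernel

theorem card_le_ncard_of_subset_support_extend_val {M : Type*} [Zero M] {n : ℕ}
    {z : Fin n → M} {S : Finset ℕ}
    (hS : ↑S ⊆ Function.support (Function.extend Fin.val z 0)) :
    S.card ≤ {j | z j ≠ 0}.ncard := by
  have hsub : ↑S ⊆ Fin.val '' {j | z j ≠ 0} := by
    intro c hc
    have hzc := hS hc
    by_cases hcn : c < n
    · refine ⟨⟨c, hcn⟩, ?_, rfl⟩
      show z ⟨c, hcn⟩ ≠ 0
      rwa [← Fin.val_injective.extend_apply z 0 ⟨c, hcn⟩]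
    · exact absurd (extend_val_apply_of_le z (not_lt.1 hcn)) hzc
  calc S.card = (S : Set ℕ).ncard := (Set.ncard_coe_finset S).symm
    _ ≤ (Fin.val '' {j | z j ≠ 0}).ncard := Set.ncard_le_ncard hsub (Set.toFinite _)
    _ = {j | z j ≠ 0}.ncard := Set.ncard_image_of_injective _ Fin.val_injective

theorem add_one_le_ncard_of_blockBidiag_mulVec_eq_zero {L t : ℕ} (hL : 2 ≤ L)
    {z : Fin (L * t) → ℝ} (hz : z ≠ 0) (h : blockBidiag L t *ᵥ z = 0) :
    L + 1 ≤ {j | z j ≠ 0}.ncard := by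
  have hne : Function.extend Fin.val z 0 ≠ 0 := fun h0 => hz <| funext fun j => by
    simpa [Fin.val_injective.extend_apply] using congrFun h0 j
  obtain ⟨S, hcard, hS⟩ :=
    (isBlockBidiagNull_extend_val hL h).exists_card_eq_subset_support hL hne
  exact hcard ▸ card_le_ncard_of_subset_support_extend_val hS

theorem stmt_4_general (k t : ℕ)
    (A : Matrix (Fin (2 * k * t - t + 1)) (Fin (2 * k * t)) ℝ)
    (hA : ∀ r c, A r c =
      if r.val = c.val / (2 * k) * (2 * k - 1) + c.val % (2 * k)
        ∨ (c.val % (2 * k) < 2 * k - 1 ∧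
            r.val = c.val / (2 * k) * (2 * k - 1) + c.val % (2 * k) + 1)
      then 1 else 0)
    (z : Fin (2 * k * t) → ℝ) (hz : z ≠ 0) (hAz : A.mulVec z = 0) :
    2 * k + 1 ≤ {j | z j ≠ 0}.ncard := by
  have hk : 0 < k :=
    Nat.pos_of_ne_zero fun hk => hz <| funext fun j => absurd j.isLt (by simp [hk])
  obtain rfl : A = blockBidiag (2 * k) t := Matrix.ext hA
  exact add_one_le_ncard_of_blockBidiag_mulVec_eq_zero (by omega) hz hAz

/-- The block-bidiagonal measurement matrix built from `D^k` (ones on the main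
diagonal and subdiagonal of each `2k × 2k` block, blocks overlapping in one row):
every nonzero null vector has at least `2k+1` nonzero entries. -/
theorem stmt_4 (n k t : ℕ) (hk : 2 ≤ k)
    (ht : t = (n + 2 * k - 1) / (2 * k)) (ht2 : 2 ≤ t)
    (A : Matrix (Fin (2 * k * t - t + 1)) (Fin (2 * k * t)) ℝ)
    (hA : ∀ r c, A r c =
      if r.val = c.val / (2 * k) * (2 * k - 1) + c.val % (2 * k)
        ∨ (c.val % (2 * k) < 2 * k - 1 ∧
            r.val = c.val / (2 * k) * (2 * k - 1) + c.val % (2 * k) + 1)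
      then 1 else 0)
    (z : Fin (2 * k * t) → ℝ) (hz : z ≠ 0) (hAz : A.mulVec z = 0) :
    2 * k + 1 ≤ {j | z j ≠ 0}.ncard :=
  stmt_4_general k t A hA z hz hAz
end

section
/- On a cycle graph with n nodes where each measurement must be a sum over a set of consecutive nodes, any set of measurements that can distinguish all vectors with at most 2 nonzero entries must contain at least n measurements. More precisely: if a 0-1 measurement matrix A (rows supported on cyclic intervals) identifies all 2-sparse vectors, then every node must be an endpoint of a measurement interval at least twice, hence the number of measurements is at least n. -/
/-!
If every interval containing a node `u` also contains its cyclic successor `v`, then the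
vectors supported on `{v}` and on `{u, v}` give the same outcomes, contradicting
identifiability of 2-sparse vectors. Hence every node is the right end of some measured
interval, so the map sending a measurement to the right end of its interval is onto the
`n` nodes.
-/

open Function Equiv.Perm

def IdentifiesTwoSparse {ι α : Type*} (meas : ι → α → Prop) : Prop :=
  ∀ x₁ x₂ : α → Bool, {j | x₁ j = true}.ncard ≤ 2 → {j | x₂ j = true}.ncard ≤ 2 →
    (∀ i, (∃ j, meas i j ∧ x₁ j = true) ↔ (∃ j, meas i j ∧ x₂ j = true)) → x₁ = x₂

theorem IdentifiesTwoSparse.exists_mem_not_mem {ι α : Type*} {meas : ι → α → Prop}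
    (hid : IdentifiesTwoSparse meas) {u v : α} (huv : u ≠ v) :
    ∃ i, meas i u ∧ ¬ meas i v := by
  classical
  by_contra! hcon
  have hsame := hid (fun j => decide (j = v)) (fun j => decide (j = u ∨ j = v))
    (by simp) (by simp [Set.ofPred_or, Set.ncard_pair huv.symm]) fun i => by
      simp only [decide_eq_true_eq]
      constructor
      · rintro ⟨j, hj, rfl⟩
        exact ⟨_, hj, Or.inr rfl⟩
      · rintro ⟨j, hj, rfl | rfl⟩
        · exact ⟨_, hcon i hj, rfl⟩
        · exact ⟨_, hj, rfl⟩
  simpa [huv] using congrFun hsame u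

def cyclicInterval (n a l : ℕ) : Set ℕ := {u | ∃ s < l, u = (a + s) % n}

theorem eq_end_of_mem_cyclicInterval_of_succ_notMem {n a l u : ℕ}
    (hu : u ∈ cyclicInterval n a l) (hsucc : (u + 1) % n ∉ cyclicInterval n a l) :
    u = (a + (l - 1)) % n := by
  obtain ⟨s, hs, rfl⟩ := hu
  obtain rfl : s = l - 1 := by
    by_contra hne
    refine hsucc ⟨s + 1, by omega, ?_⟩
    rw [Nat.mod_add_mod, Nat.add_assoc]
  rfl

theorem val_finRotate {n : ℕ} (u : Fin n) : (finRotate n u).val = (u.val + 1) % n := by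
  obtain _ | n := n
  · exact u.elim0
  · rw [finRotate_apply, Fin.val_add, Fin.val_one', Nat.add_mod_mod]

theorem finRotate_ne_self {n : ℕ} (hn : 2 ≤ n) (u : Fin n) : finRotate n u ≠ u :=
  mem_support.mp (by simp [support_finRotate_of_le hn])

theorem stmt_5_general (n m : ℕ) (hn : 3 ≤ n)
    (a l : Fin m → ℕ)
    (meas : Fin m → Fin n → Prop)
    (hmeas : ∀ i j, meas i j ↔ ∃ s < l i, j.val = (a i + s) % n)
    (hid : ∀ x₁ x₂ : Fin n → Bool,
      {j | x₁ j = true}.ncard ≤ 2 → {j | x₂ j = true}.ncard ≤ 2 →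
      (∀ i, (∃ j, meas i j ∧ x₁ j = true) ↔ (∃ j, meas i j ∧ x₂ j = true)) →
      x₁ = x₂) :
    n ≤ m := by
  let rightEnd : Fin m → Fin n := fun i => ⟨(a i + (l i - 1)) % n, Nat.mod_lt _ (by omega)⟩
  have hsurj : Surjective rightEnd := by
    intro u
    obtain ⟨i, hu, hsucc⟩ :=
      IdentifiesTwoSparse.exists_mem_not_mem hid (finRotate_ne_self (by omega) u).symm
    rw [hmeas, val_finRotate] at hsucc
    exact ⟨i, Fin.ext (eq_end_of_mem_cyclicInterval_of_succ_notMem ((hmeas i u).1 hu) hsucc).symm⟩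
  simpa using Fintype.card_le_of_surjective rightEnd hsurj

/-- Group testing on a cycle of `n` nodes where each measurement is a cyclic
interval: any collection of measurements distinguishing all vectors with at most
two nonzero (true) entries must contain at least `n` measurements. -/
theorem stmt_5 (n m : ℕ) (hn : 3 ≤ n)
    (a l : Fin m → ℕ) (hl : ∀ i, 1 ≤ l i ∧ l i ≤ n)
    (meas : Fin m → Fin n → Prop)
    (hmeas : ∀ i j, meas i j ↔ ∃ s < l i, j.val = (a i + s) % n)
    (hid : ∀ x₁ x₂ : Fin n → Bool,
      {j | x₁ j = true}.ncard ≤ 2 → {j | x₂ j = true}.ncard ≤ 2 →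
      (∀ i, (∃ j, meas i j ∧ x₁ j = true) ↔ (∃ j, meas i j ∧ x₂ j = true)) →
      x₁ = x₂) :
    n ≤ m :=
  stmt_5_general n m hn a l meas hmeas hid
end

section
/- Let G be a graph with n nodes admitting an r-partition N₁, …, N_r (disjoint sets covering V such that for each i, V ∖ N_i is a hub for N_i). If for each i there exists a measurement scheme with M_i measurements identifying all k-sparse vectors on N_i (treating N_i as a complete graph), then there exists a feasible measurement scheme on G, with each measurement supported on a connected induced subgraph, using at most Σᵢ Mᵢ + r measurements that identifies all k-sparse vectors associated with G. -/
/-!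
Each block `Nᵢ` is measured through its hub `V ∖ Nᵢ`: every row of the scheme for `Nᵢ` is
extended by the whole hub (connected by the hub property), and one extra row measures the hub
alone. Subtracting the hub row recovers the measurements of the restriction of `x` to `Nᵢ`,
which is again `k`-sparse, so it is identified; as the blocks cover `V`, so is `x`.
-/

open Finset Matrix

namespace SimpleGraph

variable {V : Type*} (G : SimpleGraph V)

def IsHub (H T : Set V) : Prop :=
  (G.induce H).Connected ∧ ∀ u ∈ T, ∃ s ∈ H, G.Adj u s

variable {G}

lemma induce_connected_of_subset_of_forall_exists_adj {s u : Set V}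
    (hs : (G.induce s).Connected) (hsu : s ⊆ u)
    (hadj : ∀ v ∈ u, v ∉ s → ∃ w ∈ s, G.Adj v w) : (G.induce u).Connected := by
  obtain ⟨⟨x, hx⟩⟩ := hs.nonempty
  refine G.induce_connected_of_patches x (hsu hx) fun {v} hv => ?_
  by_cases hvs : v ∈ s
  · exact ⟨s, hsu, hx, hvs, hs.preconnected _ _⟩
  obtain ⟨w, hw, hvw⟩ := hadj v hv hvs
  have hsv : (G.induce (s ∪ {v})).Connected :=
    connected_induce_union (t := {v}) hs.preconnected .of_subsingleton hw rfl hvw.symm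
  exact ⟨s ∪ {v}, Set.union_subset hsu (Set.singleton_subset_iff.2 hv), Or.inl hx, Or.inr rfl,
    hsv.preconnected _ _⟩

lemma IsHub.induce_connected {H T u : Set V} (h : G.IsHub H T) (hHu : H ⊆ u)
    (huT : u ⊆ H ∪ T) : (G.induce u).Connected :=
  induce_connected_of_subset_of_forall_exists_adj h.1 hHu fun v hv hvH =>
    h.2 v ((huT hv).resolve_left hvH)

end SimpleGraph

def SparseIdentifying {m n : Type*} [Fintype n] (k : ℕ) (A : Matrix m n ℝ) : Prop :=
  ∀ x₁ x₂ : n → ℝ, {j | x₁ j ≠ 0}.ncard ≤ k → {j | x₂ j ≠ 0}.ncard ≤ k →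
    A *ᵥ x₁ = A *ᵥ x₂ → x₁ = x₂

lemma SparseIdentifying.submatrix {l m n : Type*} [Fintype n] {k : ℕ} {A : Matrix m n ℝ}
    (hA : SparseIdentifying k A) {f : l → m} (hf : f.Surjective) :
    SparseIdentifying k (A.submatrix f id) :=
  fun x₁ x₂ hx₁ hx₂ h => hA x₁ x₂ hx₁ hx₂ (hf.injective_comp_right h)

lemma ncard_restrict_support_le {V : Type*} [Finite V] (S : Set V) (x : V → ℝ) :
    {j : S | x j ≠ 0}.ncard ≤ {j | x j ≠ 0}.ncard :=
  Set.ncard_le_ncard_of_injOn Subtype.val (fun _ hj => hj) Subtype.val_injective.injOn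

section HubMeasurement

variable {V : Type*} [DecidableEq V] (S : Finset V) {m : Type*}

def hubExtend (B : Matrix m S ℝ) : Matrix m V ℝ :=
  fun a j => if h : j ∈ S then B a ⟨j, h⟩ else 1

def hubRow : V → ℝ := fun j => if j ∈ S then 0 else 1

variable {S}

lemma hubExtend_mulVec [Fintype V] (B : Matrix m S ℝ) (x : V → ℝ) :
    hubExtend S B *ᵥ x = B *ᵥ (fun j : S => x j) + fun _ => ∑ j ∈ Sᶜ, x j := by
  ext a
  simp only [mulVec, dotProduct, Pi.add_apply, ← sum_add_sum_compl S, hubExtend]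
  congr 1
  · rw [← sum_attach S, univ_eq_attach]
    exact sum_congr rfl fun j _ => by simp [j.2]
  · exact sum_congr rfl fun j hj => by simp [mem_compl.1 hj]

lemma hubRow_dotProduct [Fintype V] (x : V → ℝ) : hubRow S ⬝ᵥ x = ∑ j ∈ Sᶜ, x j := by
  simp only [dotProduct, hubRow, ite_mul, zero_mul, one_mul, sum_ite, sum_const_zero, zero_add,
    filter_not, filter_mem_eq_inter, univ_inter, compl_eq_univ_sdiff]

lemma hubExtend_apply_eq_zero_or_one {B : Matrix m S ℝ} (hB : ∀ a j, B a j = 0 ∨ B a j = 1)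
    (a : m) (j : V) : hubExtend S B a j = 0 ∨ hubExtend S B a j = 1 := by
  unfold hubExtend
  split_ifs
  exacts [hB a _, Or.inr rfl]

lemma hubRow_eq_zero_or_one (j : V) : hubRow S j = 0 ∨ hubRow S j = 1 := by
  unfold hubRow
  split_ifs <;> simp

lemma setOf_hubRow_eq_one : {j | hubRow S j = 1} = (↑S : Set V)ᶜ := by
  ext j
  by_cases h : j ∈ S <;> simp [hubRow, h]

lemma connected_induce_hubExtend_row {G : SimpleGraph V} (hS : G.IsHub (↑S)ᶜ ↑S)
    (B : Matrix m S ℝ) (a : m) : (G.induce {j | hubExtend S B a j = 1}).Connected :=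
  hS.induce_connected (fun j hj => by simp [hubExtend, show j ∉ S from hj])
    fun j _ => (em (j ∈ S)).symm

end HubMeasurement

section PartitionMeasurement

variable {V ι : Type*} [DecidableEq V] {m : ι → Type*} {N : ι → Finset V}
  {B : ∀ i, Matrix (m i) (N i) ℝ}

variable (N B) in
def partitionMatrix : Matrix ((Σ i, m i) ⊕ ι) V ℝ :=
  fromRows (fun p => hubExtend (N p.1) (B p.1) p.2) (fun i => hubRow (N i))

lemma partitionMatrix_apply_eq_zero_or_one (hB : ∀ i a j, B i a j = 0 ∨ B i a j = 1)
    (p : (Σ i, m i) ⊕ ι) (j : V) :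
    partitionMatrix N B p j = 0 ∨ partitionMatrix N B p j = 1 := by
  rcases p with ⟨i, a⟩ | i
  exacts [hubExtend_apply_eq_zero_or_one (hB i) a j, hubRow_eq_zero_or_one j]

lemma connected_induce_partitionMatrix_row {G : SimpleGraph V}
    (hN : ∀ i, G.IsHub (↑(N i))ᶜ ↑(N i)) (p : (Σ i, m i) ⊕ ι) :
    (G.induce {j | partitionMatrix N B p j = 1}).Connected := by
  rcases p with ⟨i, a⟩ | i
  · exact connected_induce_hubExtend_row (hN i) (B i) a
  · change (G.induce {j | hubRow (N i) j = 1}).Connected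
    rw [setOf_hubRow_eq_one]
    exact (hN i).1

variable [Fintype V]

lemma partitionMatrix_mulVec_inl (x : V → ℝ) (i : ι) (a : m i) :
    (partitionMatrix N B *ᵥ x) (.inl ⟨i, a⟩) = (hubExtend (N i) (B i) *ᵥ x) a :=
  rfl

lemma partitionMatrix_mulVec_inr (x : V → ℝ) (i : ι) :
    (partitionMatrix N B *ᵥ x) (.inr i) = hubRow (N i) ⬝ᵥ x :=
  rfl

lemma mulVec_restrict_eq_of_partitionMatrix_mulVec_eq {x₁ x₂ : V → ℝ}
    (h : partitionMatrix N B *ᵥ x₁ = partitionMatrix N B *ᵥ x₂) (i : ι) :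
    B i *ᵥ (fun j : N i => x₁ j) = B i *ᵥ (fun j : N i => x₂ j) := by
  have hub : ∑ j ∈ (N i)ᶜ, x₁ j = ∑ j ∈ (N i)ᶜ, x₂ j := by
    simpa only [partitionMatrix_mulVec_inr, hubRow_dotProduct] using congrFun h (.inr i)
  ext a
  simpa only [partitionMatrix_mulVec_inl, hubExtend_mulVec, hub, Pi.add_apply, add_left_inj]
    using congrFun h (.inl ⟨i, a⟩)

lemma sparseIdentifying_partitionMatrix {k : ℕ} (hcover : ∀ v, ∃ i, v ∈ N i)
    (hB : ∀ i, SparseIdentifying k (B i)) : SparseIdentifying k (partitionMatrix N B) := by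
  intro x₁ x₂ hx₁ hx₂ h
  funext v
  obtain ⟨i, hv⟩ := hcover v
  have hrestrict := hB i _ _ ((ncard_restrict_support_le _ x₁).trans hx₁)
    ((ncard_restrict_support_le _ x₂).trans hx₂)
    (mulVec_restrict_eq_of_partitionMatrix_mulVec_eq h i)
  exact congrFun hrestrict ⟨v, hv⟩

end PartitionMeasurement

theorem stmt_7_general {V : Type*} [Fintype V] [DecidableEq V] (G : SimpleGraph V)
    (k r : ℕ) (N : Fin r → Finset V)
    (hcover : ∀ v : V, ∃ i, v ∈ N i)
    (hhub : ∀ i, (G.induce ((↑(N i) : Set V)ᶜ)).Connected ∧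
      ∀ u ∈ N i, ∃ s : V, s ∉ N i ∧ G.Adj u s)
    (M : Fin r → ℕ)
    (B : ∀ i, Matrix (Fin (M i)) (N i) ℝ)
    (hB01 : ∀ i a b, B i a b = 0 ∨ B i a b = 1)
    (hBid : ∀ i, ∀ x₁ x₂ : (N i) → ℝ,
      {j | x₁ j ≠ 0}.ncard ≤ k → {j | x₂ j ≠ 0}.ncard ≤ k →
      (B i).mulVec x₁ = (B i).mulVec x₂ → x₁ = x₂) :
    ∃ m, m ≤ (∑ i, M i) + r ∧ ∃ A : Matrix (Fin m) V ℝ,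
      (∀ a j, A a j = 0 ∨ A a j = 1) ∧
      (∀ a, (G.induce {j | A a j = 1}).Connected) ∧
      (∀ x₁ x₂ : V → ℝ, {j | x₁ j ≠ 0}.ncard ≤ k → {j | x₂ j ≠ 0}.ncard ≤ k →
        A.mulVec x₁ = A.mulVec x₂ → x₁ = x₂) := by
  let e := Fintype.equivFin ((Σ i, Fin (M i)) ⊕ Fin r)
  have hcard : Fintype.card ((Σ i, Fin (M i)) ⊕ Fin r) = (∑ i, M i) + r := by simp
  refine ⟨_, hcard.le, (partitionMatrix N B).submatrix e.symm id,
    fun _ j => partitionMatrix_apply_eq_zero_or_one hB01 _ j,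
    fun _ => connected_induce_partitionMatrix_row hhub _,
    (sparseIdentifying_partitionMatrix hcover hBid).submatrix e.symm.surjective⟩

/-- Measurement construction from an `r`-partition: if `N₁, …, N_r` partition the
vertices of `G` and each complement `V ∖ Nᵢ` is a hub for `Nᵢ`, and each `Nᵢ`
admits a 0-1 measurement matrix with `Mᵢ` rows identifying `k`-sparse vectors,
then `G` admits a feasible (connected-support) 0-1 measurement scheme with at
most `Σᵢ Mᵢ + r` measurements identifying all `k`-sparse vectors on `G`. -/
theorem stmt_7 {V : Type*} [Fintype V] [DecidableEq V] (G : SimpleGraph V)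
    (k r : ℕ) (N : Fin r → Finset V)
    (hdisj : ∀ i j, i ≠ j → Disjoint (N i) (N j))
    (hcover : ∀ v : V, ∃ i, v ∈ N i)
    (hhub : ∀ i, (G.induce ((↑(N i) : Set V)ᶜ)).Connected ∧
      ∀ u ∈ N i, ∃ s : V, s ∉ N i ∧ G.Adj u s)
    (M : Fin r → ℕ)
    (B : ∀ i, Matrix (Fin (M i)) (N i) ℝ)
    (hB01 : ∀ i a b, B i a b = 0 ∨ B i a b = 1)
    (hBid : ∀ i, ∀ x₁ x₂ : (N i) → ℝ,
      {j | x₁ j ≠ 0}.ncard ≤ k → {j | x₂ j ≠ 0}.ncard ≤ k →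
      (B i).mulVec x₁ = (B i).mulVec x₂ → x₁ = x₂) :
    ∃ m, m ≤ (∑ i, M i) + r ∧ ∃ A : Matrix (Fin m) V ℝ,
      (∀ a j, A a j = 0 ∨ A a j = 1) ∧
      (∀ a, (G.induce {j | A a j = 1}).Connected) ∧
      (∀ x₁ x₂ : V → ℝ, {j | x₁ j ≠ 0}.ncard ≤ k → {j | x₂ j ≠ 0}.ncard ≤ k →
        A.mulVec x₁ = A.mulVec x₂ → x₁ = x₂) :=
  stmt_7_general G k r N hcover hhub M B hB01 hBid
end

section
/- Let Φ' be a random p × n matrix with i.i.d. entries taking values ±1/√p with equal probability. Construct Φ̂ from Φ' by negating row i (all entries in row i) exactly when Φ'_{i,n} = 1/√p. Then (i) Φ̂ has the same probability distribution as the matrix Φ whose last column is constantly −1/√p and whose other entries are i.i.d. ±1/√p; and (ii) for every column-index subset U, Φ'_U^T Φ'_U = Φ̂_U^T Φ̂_U, so Φ' and Φ̂ have identical restricted singular values: ‖Φ'_U x‖₂ = ‖Φ̂_U x‖₂ for all x. -/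
/-!
Negating a whole row leaves every product `Φ_{i j₁} Φ_{i j₂}` unchanged, which gives the Gram
matrices and the restricted norms. For the distribution, `Φ̂ ω = Φ (f ω)` where `f` replaces each
entry `ω i j` off the last column by `ω i j xor ω i last`; `f` is an involution of the sign space,
so it preserves the uniform measure.
-/

open MeasureTheory

theorem PMF.map_toMeasure_uniformOfFintype_equiv {α : Type*} [Fintype α] [Nonempty α]
    [MeasurableSpace α] [MeasurableSingletonClass α] (e : α ≃ α) :
    (PMF.uniformOfFintype α).toMeasure.map e = (PMF.uniformOfFintype α).toMeasure := by
  refine Measure.ext_iff_singleton.mpr fun a => ?_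
  rw [Measure.map_apply (measurable_of_countable e) (measurableSet_singleton a),
    show e ⁻¹' {a} = {e.symm a} by ext; simp [Equiv.eq_symm_apply],
    PMF.toMeasure_apply_singleton _ _ (measurableSet_singleton _),
    PMF.toMeasure_apply_singleton _ _ (measurableSet_singleton _),
    PMF.uniformOfFintype_apply, PMF.uniformOfFintype_apply]

section RowSigns

variable {m ι R : Type*} [Fintype m] [CommRing R] {A B : m → ι → R}

theorem sum_mul_eq_of_rows_eq_or_neg (h : ∀ i, B i = A i ∨ B i = -A i) (j₁ j₂ : ι) :
    ∑ i, A i j₁ * A i j₂ = ∑ i, B i j₁ * B i j₂ :=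
  Finset.sum_congr rfl fun i _ => by rcases h i with hi | hi <;> simp [hi]

theorem sum_sq_sum_mul_eq_of_rows_eq_or_neg (h : ∀ i, B i = A i ∨ B i = -A i)
    (U : Finset ι) (x : ι → R) :
    ∑ i, (∑ j ∈ U, A i j * x j) ^ 2 = ∑ i, (∑ j ∈ U, B i j * x j) ^ 2 :=
  Finset.sum_congr rfl fun i _ => by
    rcases h i with hi | hi <;> simp [hi, Finset.sum_neg_distrib]

end RowSigns

def xorRowsWithColumn {m ι : Type*} [DecidableEq ι] (c : ι) (ω : m → ι → Bool) : m → ι → Bool :=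
  fun i j => if j = c then ω i j else xor (ω i j) (ω i c)

theorem xorRowsWithColumn_involutive {m ι : Type*} [DecidableEq ι] (c : ι) :
    Function.Involutive (xorRowsWithColumn (m := m) c) := fun ω => by
  funext i j
  by_cases hj : j = c <;> simp [xorRowsWithColumn, hj]

open MeasureTheory in
theorem stmt_9_general (p n : ℕ)
    (μ : Measure (Fin p → Fin n → Bool))
    (hμ : μ = (PMF.uniformOfFintype (Fin p → Fin n → Bool)).toMeasure)
    (last : Fin n)
    (Φ' Φhat Φ : (Fin p → Fin n → Bool) → Fin p → Fin n → ℝ)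
    (hΦ' : ∀ ω i j, Φ' ω i j = if ω i j then 1 / Real.sqrt p else -1 / Real.sqrt p)
    (hΦhat : ∀ ω i j, Φhat ω i j = if ω i last then -(Φ' ω i j) else Φ' ω i j)
    (hΦ : ∀ ω i j, Φ ω i j = if j = last then -1 / Real.sqrt p
      else if ω i j then 1 / Real.sqrt p else -1 / Real.sqrt p) :
    μ.map Φhat = μ.map Φ ∧
    ∀ ω, ∀ U : Finset (Fin n),
      (∀ j₁ ∈ U, ∀ j₂ ∈ U,
        ∑ i, Φ' ω i j₁ * Φ' ω i j₂ = ∑ i, Φhat ω i j₁ * Φhat ω i j₂) ∧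
      ∀ x : Fin n → ℝ,
        ∑ i, (∑ j ∈ U, Φ' ω i j * x j) ^ 2 = ∑ i, (∑ j ∈ U, Φhat ω i j * x j) ^ 2 := by
  have hflip : Φhat = Φ ∘ xorRowsWithColumn last := by
    ext ω i j
    by_cases hj : j = last
    · subst hj
      cases h : ω i j <;> simp [hΦhat, hΦ, hΦ', h, neg_div]
    · cases hc : ω i last <;> cases h : ω i j <;>
        simp [hΦhat, hΦ, hΦ', xorRowsWithColumn, hj, hc, h, neg_div]
  have hrows : ∀ ω i, Φhat ω i = Φ' ω i ∨ Φhat ω i = -Φ' ω i := fun ω i => by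
    by_cases hc : ω i last
    · exact Or.inr (funext fun j => by simp [hΦhat, hc])
    · exact Or.inl (funext fun j => by simp [hΦhat, hc])
  refine ⟨?_, fun ω U => ⟨fun j₁ _ j₂ _ => sum_mul_eq_of_rows_eq_or_neg (hrows ω) j₁ j₂,
    sum_sq_sum_mul_eq_of_rows_eq_or_neg (hrows ω) U⟩⟩
  have hpreserve : μ.map (xorRowsWithColumn last) = μ := by
    subst hμ
    exact PMF.map_toMeasure_uniformOfFintype_equiv (xorRowsWithColumn_involutive last).toPerm
  rw [hflip, ← Measure.map_map (measurable_of_countable Φ) (measurable_of_countable _), hpreserve]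

open MeasureTheory in
/-- Row-flipping lemma: let `Φ'` be the i.i.d. `±1/√p` matrix built from uniform
random signs `ω`, and let `Φ̂` negate every row whose entry in the last column is
`+1/√p`. Then (i) `Φ̂` has the same distribution as the matrix `Φ` whose last
column is constantly `-1/√p` and whose other entries are i.i.d. `±1/√p`; and
(ii) pointwise, `Φ'` and `Φ̂` have identical column Gram matrices and restricted
norms. -/
theorem stmt_9 (p n : ℕ) (hp : 0 < p) (hn : 0 < n)
    (μ : Measure (Fin p → Fin n → Bool))
    (hμ : μ = (PMF.uniformOfFintype (Fin p → Fin n → Bool)).toMeasure)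
    (last : Fin n) (hlast : last.val = n - 1)
    (Φ' Φhat Φ : (Fin p → Fin n → Bool) → Fin p → Fin n → ℝ)
    (hΦ' : ∀ ω i j, Φ' ω i j = if ω i j then 1 / Real.sqrt p else -1 / Real.sqrt p)
    (hΦhat : ∀ ω i j, Φhat ω i j = if ω i last then -(Φ' ω i j) else Φ' ω i j)
    (hΦ : ∀ ω i j, Φ ω i j = if j = last then -1 / Real.sqrt p
      else if ω i j then 1 / Real.sqrt p else -1 / Real.sqrt p) :
    μ.map Φhat = μ.map Φ ∧
    ∀ ω, ∀ U : Finset (Fin n),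
      (∀ j₁ ∈ U, ∀ j₂ ∈ U,
        ∑ i, Φ' ω i j₁ * Φ' ω i j₂ = ∑ i, Φhat ω i j₁ * Φhat ω i j₂) ∧
      ∀ x : Fin n → ℝ,
        ∑ i, (∑ j ∈ U, Φ' ω i j * x j) ^ 2 = ∑ i, (∑ j ∈ U, Φhat ω i j * x j) ^ 2 :=
  stmt_9_general p n μ hμ last Φ' Φhat Φ hΦ' hΦhat hΦ
end

section
/- Let A be an m × n real matrix. A vector x with ‖x‖₀ ≤ k is the unique solution of min ‖z‖₁ subject to A z = A x for every k-sparse x if the following null space property holds: for every nonzero w with A w = 0 and every set T ⊆ {1,…,n} with |T| ≤ k, ‖w_T‖₁ < ‖w‖₁/2. -/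
/-! Write a competitor as `z = x + w` with `A w = 0`, and let `T` be the support of `x`.
By the triangle inequality `‖z‖₁ ≥ ‖x‖₁ - ‖w_T‖₁ + ‖w_{Tᶜ}‖₁`, and the null space property
says exactly that `‖w_T‖₁ < ‖w_{Tᶜ}‖₁` when `w ≠ 0`. -/

open Finset

lemma le_sum_abs_add_of_support_subset {ι α : Type*} [Fintype ι] [DecidableEq ι]
    [AddCommGroup α] [LinearOrder α] [IsOrderedAddMonoid α]
    {x : ι → α} {T : Finset ι} (hx : Function.support x ⊆ T) (w : ι → α) :
    ∑ j, |x j| - ∑ j ∈ T, |w j| + ∑ j ∈ Tᶜ, |w j| ≤ ∑ j, |x j + w j| := by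
  have hx_compl : ∀ j ∈ Tᶜ, x j = 0 := fun j hj =>
    Function.notMem_support.mp fun h => mem_compl.mp hj (hx h)
  have hx_sum : ∑ j, |x j| = ∑ j ∈ T, |x j| :=
    (sum_subset (subset_univ T) fun j _ hj => by simp [hx_compl j (mem_compl.mpr hj)]).symm
  have on_T : ∑ j ∈ T, |x j| - ∑ j ∈ T, |w j| ≤ ∑ j ∈ T, |x j + w j| := by
    rw [← sum_sub_distrib]
    exact sum_le_sum fun j _ => by simpa using abs_sub_abs_le_abs_sub (x j) (-w j)
  have on_compl : ∑ j ∈ Tᶜ, |x j + w j| = ∑ j ∈ Tᶜ, |w j| :=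
    sum_congr rfl fun j hj => by rw [hx_compl j hj, zero_add]
  rw [hx_sum, ← sum_add_sum_compl T fun j => |x j + w j|, on_compl]
  exact add_le_add_left on_T _

/-- The null space property implies exact `k`-sparse recovery by
`ℓ₁`-minimization: every `k`-sparse `x` is the unique minimizer of `‖z‖₁`
subject to `A z = A x`. -/
theorem stmt_11 (m n k : ℕ) (A : Matrix (Fin m) (Fin n) ℝ)
    (hNSP : ∀ w : Fin n → ℝ, w ≠ 0 → A.mulVec w = 0 →
      ∀ T : Finset (Fin n), T.card ≤ k → ∑ j ∈ T, |w j| < (∑ j, |w j|) / 2) :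
    ∀ x : Fin n → ℝ, {j | x j ≠ 0}.ncard ≤ k →
      ∀ z : Fin n → ℝ, A.mulVec z = A.mulVec x → z ≠ x →
        ∑ j, |x j| < ∑ j, |z j| := by
  intro x hx z hAz hzx
  set T := {j | x j ≠ 0}.toFinset
  have hT : T.card ≤ k := by rwa [← Set.ncard_eq_toFinset_card']
  have hNS := hNSP (z - x) (sub_ne_zero.mpr hzx) (by simp [Matrix.mulVec_sub, hAz]) T hT
  have hsplit := sum_add_sum_compl T fun j => |(z - x) j|
  have hz := le_sum_abs_add_of_support_subset (x := x) (T := T)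
    (fun j hj => Set.mem_toFinset.mpr hj) (z - x)
  simp only [Pi.sub_apply, add_sub_cancel] at hsplit hNS hz
  linarith
end

section
/- Consider an m × (n+1) matrix P such that the sum of any k or fewer columns of P is nonzero (in particular, every k columns of P are linearly independent over sums with coefficients 1). If P is the oriented incidence structure of a graph G_eq on n+1 vertices (each row having one +1, one −1, rest 0), then every connected component of G_eq has at least k+1 vertices, and consequently m ≥ n+1 − ⌊(n+1)/(k+1)⌋. -/
/-!
The columns of `P` indexed by a connected component of `G_eq` sum to zero, because every row
is `e_a - e_b` for an edge `ab`, and an edge has both ends or no end in a component; so no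
component has at most `k` vertices, and `G_eq` has at most `(n+1)/(k+1)` components.
For the bound on `m`, a vector in the kernel of `P` is constant along every edge, hence on every
component, so `dim ker P ≤ #components`; by rank–nullity `m ≥ rank P ≥ n + 1 - #components`.
-/

open SimpleGraph Finset Matrix

variable {ι V R : Type*}

def IsOrientedEdgeRow [Zero R] [One R] [Neg R] (r : V → R) (a b : V) : Prop :=
  a ≠ b ∧ r a = 1 ∧ r b = -1 ∧ ∀ l, l ≠ a → l ≠ b → r l = 0

namespace IsOrientedEdgeRow

variable {r : V → R} {a b v : V}

section Ring

variable [Ring R]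

theorem sum_eq_zero_of_mem_iff (h : IsOrientedEdgeRow r a b) {s : Finset V} (hs : a ∈ s ↔ b ∈ s) :
    ∑ l ∈ s, r l = 0 := by
  obtain ⟨hab, ha, hb, h0⟩ := h
  by_cases has : a ∈ s
  · rw [Finset.sum_eq_add_of_mem a b has (hs.mp has) hab fun l _ hl => h0 l hl.1 hl.2, ha, hb,
      add_neg_cancel]
  · exact Finset.sum_eq_zero fun l hl => h0 l (ne_of_mem_of_not_mem hl has)
      (ne_of_mem_of_not_mem hl (mt hs.mpr has))

theorem dotProduct_eq [Fintype V] (h : IsOrientedEdgeRow r a b) (x : V → R) :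
    r ⬝ᵥ x = x a - x b := by
  obtain ⟨hab, ha, hb, h0⟩ := h
  rw [dotProduct, Finset.sum_eq_add_of_mem a b (mem_univ a) (mem_univ b) hab
    fun l _ hl => by rw [h0 l hl.1 hl.2, zero_mul], ha, hb, one_mul, neg_one_mul, sub_eq_add_neg]

theorem eq_of_dotProduct_eq_zero [Fintype V] (h : IsOrientedEdgeRow r a b) {x : V → R}
    (hx : r ⬝ᵥ x = 0) : x a = x b :=
  sub_eq_zero.mp (h.dotProduct_eq x ▸ hx)

variable [CharZero R]

theorem apply_eq_one_iff (h : IsOrientedEdgeRow r a b) : r v = 1 ↔ v = a := by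
  obtain ⟨hab, ha, hb, h0⟩ := h
  refine ⟨fun hv => by_contra fun hva => ?_, fun hv => hv ▸ ha⟩
  by_cases hvb : v = b
  · norm_num [hvb, hb] at hv
  · norm_num [h0 v hva hvb] at hv

theorem apply_eq_neg_one_iff (h : IsOrientedEdgeRow r a b) : r v = -1 ↔ v = b := by
  obtain ⟨hab, ha, hb, h0⟩ := h
  refine ⟨fun hv => by_contra fun hvb => ?_, fun hv => hv ▸ hb⟩
  by_cases hva : v = a
  · norm_num [hva, ha] at hv
  · norm_num [h0 v hva hvb] at hv

end Ring

end IsOrientedEdgeRow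

namespace SimpleGraph

variable {G : SimpleGraph V}

theorem Reachable.eq_of_forall_adj {β : Type*} {x : V → β} (hx : ∀ a b, G.Adj a b → x a = x b)
    {a b : V} (h : G.Reachable a b) : x a = x b := by
  obtain ⟨p⟩ := h
  induction p with
  | nil => rfl
  | cons hadj _ ih => exact (hx _ _ hadj).trans ih

theorem mem_range_funLeft_connectedComponentMk (K : Type*) [Semiring K] {x : V → K}
    (hx : ∀ a b, G.Adj a b → x a = x b) :
    x ∈ LinearMap.range (LinearMap.funLeft K K G.connectedComponentMk) :=
  ⟨ConnectedComponent.lift x fun _ _ p _ => Reachable.eq_of_forall_adj hx ⟨p⟩, rfl⟩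

theorem mul_card_connectedComponent_le [Fintype V] {k : ℕ}
    (h : ∀ c : G.ConnectedComponent, k ≤ Nat.card c.supp) :
    k * Nat.card G.ConnectedComponent ≤ Fintype.card V := by
  classical
  have := Fintype.ofFinite G.ConnectedComponent
  rw [Nat.card_eq_fintype_card]
  refine mul_card_image_le_card_of_maps_to (f := G.connectedComponentMk) (s := univ)
    (fun _ _ => mem_univ _) k fun c _ => ?_
  rw [← Nat.card_eq_finsetCard]
  simp only [mem_filter_univ]
  exact h c

end SimpleGraph

namespace Matrix

variable {G : SimpleGraph V}

theorem sum_cols_eq_zero_of_adj_closed [Ring R] (P : Matrix ι V R)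
    (hrows : ∀ i, ∃ a b, IsOrientedEdgeRow (P i) a b ∧ G.Adj a b) {S : Finset V}
    (hS : ∀ a b, G.Adj a b → (a ∈ S ↔ b ∈ S)) :
    (∑ v ∈ S, fun i => P i v) = 0 := by
  ext i
  obtain ⟨a, b, hrow, hab⟩ := hrows i
  rw [Finset.sum_apply]
  exact hrow.sum_eq_zero_of_mem_iff (hS a b hab)

theorem card_le_card_add_card_connectedComponent {K : Type*} [Field K] [Fintype ι] [Fintype V]
    (P : Matrix ι V K)
    (hker : ∀ x, P *ᵥ x = 0 → ∀ a b, G.Adj a b → x a = x b) :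
    Fintype.card V ≤ Fintype.card ι + Nat.card G.ConnectedComponent := by
  have := Fintype.ofFinite G.ConnectedComponent
  have hker_le : LinearMap.ker P.mulVecLin ≤
      LinearMap.range (LinearMap.funLeft K K G.connectedComponentMk) := fun x hx =>
    mem_range_funLeft_connectedComponentMk K (hker x hx)
  have hnullity : Module.finrank K (LinearMap.ker P.mulVecLin) ≤ Nat.card G.ConnectedComponent :=
    calc Module.finrank K (LinearMap.ker P.mulVecLin)
        ≤ Module.finrank K (LinearMap.range (LinearMap.funLeft K K G.connectedComponentMk)) :=
          Submodule.finrank_mono hker_le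
      _ ≤ Module.finrank K (G.ConnectedComponent → K) := LinearMap.finrank_range_le _
      _ = Nat.card G.ConnectedComponent := by
          rw [Module.finrank_fintype_fun_eq_card, Nat.card_eq_fintype_card]
  have hrank_nullity := LinearMap.finrank_range_add_finrank_ker P.mulVecLin
  rw [Module.finrank_fintype_fun_eq_card] at hrank_nullity
  have hrank : P.rank ≤ Fintype.card ι := P.rank_le_card_height
  rw [Matrix.rank] at hrank
  omega

end Matrix

open Classical in
/-- If every row of `P` has exactly one `+1`, one `-1` and zeros elsewhere, the
sum of any at most `k` columns of `P` is nonzero, and `G_eq` is the associated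
incidence graph, then every connected component of `G_eq` has at least `k+1`
vertices, and consequently `m ≥ n + 1 - ⌊(n+1)/(k+1)⌋`. -/
theorem stmt_15 (m n k : ℕ) (P : Matrix (Fin m) (Fin (n + 1)) ℝ)
    (hrows : ∀ i, ∃ j k', j ≠ k' ∧ P i j = 1 ∧ P i k' = -1 ∧
      ∀ l, l ≠ j → l ≠ k' → P i l = 0)
    (hcols : ∀ S : Finset (Fin (n + 1)), S.Nonempty → S.card ≤ k →
      (∑ j ∈ S, fun i => P i j) ≠ (0 : Fin m → ℝ))
    (Geq : SimpleGraph (Fin (n + 1)))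
    (hGeq : ∀ a b, Geq.Adj a b ↔
      ∃ i, (P i a = 1 ∧ P i b = -1) ∨ (P i b = 1 ∧ P i a = -1)) :
    (∀ c : Geq.ConnectedComponent, k + 1 ≤ Nat.card c.supp) ∧
    n + 1 - (n + 1) / (k + 1) ≤ m := by
  have hedges (i : Fin m) : ∃ a b, IsOrientedEdgeRow (P i) a b ∧ Geq.Adj a b := by
    obtain ⟨a, b, hrow⟩ := hrows i
    exact ⟨a, b, hrow, (hGeq a b).mpr ⟨i, Or.inl ⟨hrow.2.1, hrow.2.2.1⟩⟩⟩
  have hcomp (c : Geq.ConnectedComponent) : k + 1 ≤ Nat.card c.supp := by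
    rw [Nat.card_eq_card_toFinset]
    by_contra! hsmall
    refine hcols _ (Set.toFinset_nonempty.mpr c.nonempty_supp) (by omega)
      (P.sum_cols_eq_zero_of_adj_closed hedges fun a b hab => ?_)
    simp only [Set.mem_toFinset, ConnectedComponent.mem_supp_iff,
      ConnectedComponent.eq.mpr hab.reachable]
  have hker (x : Fin (n + 1) → ℝ) (hx : P *ᵥ x = 0) (a b : Fin (n + 1)) (hab : Geq.Adj a b) :
      x a = x b := by
    have hrow_eq (i : Fin m) {a b : Fin (n + 1)} (ha : P i a = 1) (hb : P i b = -1) :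
        x a = x b := by
      obtain ⟨j, j', hrow⟩ : ∃ j j', IsOrientedEdgeRow (P i) j j' := hrows i
      rw [hrow.apply_eq_one_iff.mp ha, hrow.apply_eq_neg_one_iff.mp hb]
      exact hrow.eq_of_dotProduct_eq_zero (congrFun hx i)
    obtain ⟨i, ⟨ha, hb⟩ | ⟨hb, ha⟩⟩ := (hGeq a b).mp hab
    exacts [hrow_eq i ha hb, (hrow_eq i hb ha).symm]
  have hcount := mul_card_connectedComponent_le hcomp
  have hrank := P.card_le_card_add_card_connectedComponent hker
  simp only [Fintype.card_fin] at hcount hrank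
  have hcc : Nat.card Geq.ConnectedComponent ≤ (n + 1) / (k + 1) :=
    (Nat.le_div_iff_mul_le (Nat.succ_pos k)).mpr (by rw [mul_comm]; exact hcount)
  exact ⟨hcomp, by omega⟩
end

section
/- Let k ≥ 2 be even, t ≥ 2, and define B^k as the (k+1) × (k+1) 0-1 matrix with B_{ii} = 1 for all i, B_{1i} = 1 for all i, B_{i,i−1} = 1 for 2 ≤ i ≤ k+1, and zero elsewhere. Construct the (kt+1) × (k+1)t block matrix A by placing B^k on overlapping diagonal blocks: for i = 1,…,t, the submatrix of A with rows {(i−1)k+1, …, ik+1} and columns {(k+1)(i−1)+1, …, (k+1)i} equals B^k, all other entries zero. Then B^k is invertible, and every nonzero z ∈ ℝ^{(k+1)t} with A z = 0 has at least 2k+1 nonzero entries. -/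
/-!
Write a null vector `z` of `A` block by block. The interior rows of the `q`-th copy of `B^k`
force the first `k` entries of block `q` to be `a_q, -a_q, a_q, …`; call its last entry `b_q`.
As `k` is even, the first row of each copy sums to `b_q`, and the shared rows then read
`a_q = b_q + b_(q+1)` with `b_0 = b_t = 0`. Telescoping gives `∑ (-1)^q a_q = 0`, so a nonzero
`z` has two blocks with `a_q ≠ 0`, each contributing `k` nonzero entries, and some `b_q ≠ 0`.
For `B^k` alone the same rows give `v = 0`, because `k + 1` is odd.
-/

open Finset
open scoped Matrix

variable {R : Type*} [Ring R]

theorem Finset.sum_range_mul_eq {M : Type*} [AddCommMonoid M] (f : ℕ → M) (n t : ℕ) :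
    ∑ i ∈ range (n * t), f i = ∑ q ∈ range t, ∑ m ∈ range n, f (n * q + m) := by
  induction t with
  | zero => simp
  | succ t ih => rw [Nat.mul_succ, sum_range_add, ih, sum_range_succ]

theorem eq_neg_one_pow_mul_of_add_eq_zero {x : ℕ → R} {n : ℕ}
    (h : ∀ j, j + 1 < n → x (j + 1) + x j = 0) : ∀ m < n, x m = (-1) ^ m * x 0 := by
  intro m hm
  induction m with
  | zero => simp
  | succ m ih =>
    rw [eq_neg_of_add_eq_zero_left (h m hm), ih (by omega), pow_succ, mul_neg_one, neg_mul]

theorem sum_range_eq_zero_of_add_eq_zero {x : ℕ → R} {n : ℕ} (hn : Even n)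
    (h : ∀ j, j + 1 < n → x (j + 1) + x j = 0) : ∑ m ∈ range n, x m = 0 := by
  rw [sum_congr rfl fun m hm => eq_neg_one_pow_mul_of_add_eq_zero h m (mem_range.1 hm),
    ← sum_mul, neg_one_geom_sum, if_pos hn, zero_mul]

section Recurrence

variable {a b : ℕ → R} {t : ℕ} (hab : ∀ q < t, a q = b q + b (q + 1)) (h0 : b 0 = 0)
include hab h0

theorem sum_neg_one_pow_mul_eq_zero_of_eq_add_succ (ht : b t = 0) :
    ∑ q ∈ range t, (-1) ^ q * a q = 0 := by
  have telescope : ∀ q < t, (-1) ^ q * a q =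
      -((-1) ^ (q + 1) * b (q + 1)) - -((-1) ^ q * b q) := by
    intro q hq
    rw [hab q hq, pow_succ]
    noncomm_ring
  rw [sum_congr rfl fun q hq => telescope q (mem_range.1 hq),
    sum_range_sub fun q => -((-1) ^ q * b q), ht, h0]
  simp

theorem forall_eq_zero_of_eq_add_succ (ha : ∀ q < t, a q = 0) : ∀ q ≤ t, b q = 0 := by
  intro q hq
  induction q with
  | zero => exact h0
  | succ q ih =>
    have h := hab q (by omega)
    rwa [ha q (by omega), ih (by omega), zero_add, eq_comm] at h

theorem exists_ne_ne_zero_of_eq_add_succ (ht : b t = 0) {i : ℕ} (hi : i < t) (ha : a i ≠ 0) :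
    ∃ i' < t, i' ≠ i ∧ a i' ≠ 0 := by
  by_contra! h
  have hsum := sum_neg_one_pow_mul_eq_zero_of_eq_add_succ hab h0 ht
  rw [sum_eq_single_of_mem i (mem_range.2 hi)
    fun q hq hqi => by rw [h q (mem_range.1 hq) hqi, mul_zero]] at hsum
  exact ha (((isUnit_neg_one (α := R)).pow i).mul_right_eq_zero.1 hsum)

end Recurrence

def zeroExtend {n : ℕ} (v : Fin n → R) (i : ℕ) : R :=
  if h : i < n then v ⟨i, h⟩ else 0

section ZeroExtend

variable {n : ℕ} (v : Fin n → R)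

@[simp]
theorem zeroExtend_val (i : Fin n) : zeroExtend v i = v i := dif_pos i.isLt

theorem zeroExtend_of_le {i : ℕ} (h : n ≤ i) : zeroExtend v i = 0 := dif_neg (by omega)

theorem setOf_zeroExtend_ne_zero : {i | zeroExtend v i ≠ 0} = Fin.val '' {j | v j ≠ 0} := by
  ext i
  by_cases hi : i < n <;> simp [zeroExtend, hi, Fin.exists_iff]

end ZeroExtend

def rowB (k j : ℕ) (x : ℕ → R) : R :=
  ∑ m ∈ range (k + 1), if j = m ∨ j = 0 ∨ j = m + 1 then x m else 0

section RowB

variable {k : ℕ} {x : ℕ → R}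

@[simp]
theorem rowB_zero_right (k j : ℕ) : rowB k j (0 : ℕ → R) = 0 := by
  simp [rowB]

theorem rowB_zero : rowB k 0 x = ∑ m ∈ range (k + 1), x m := by
  simp [rowB]

theorem rowB_succ {j : ℕ} (hj : j < k) : rowB k (j + 1) x = x (j + 1) + x j := by
  rw [rowB, sum_eq_add (j + 1) j (by omega) (fun m _ hm => if_neg (by omega))
    (fun h => absurd (mem_range.2 (by omega)) h) (fun h => absurd (mem_range.2 (by omega)) h),
    if_pos (by omega), if_pos (by omega)]

variable (hx : ∀ j, 0 < j → j < k → rowB k j x = 0)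
include hx

theorem add_eq_zero_of_rowB_eq_zero : ∀ j, j + 1 < k → x (j + 1) + x j = 0 := fun j hj => by
  rw [← rowB_succ (show j < k by omega), hx _ (by omega) hj]

theorem eq_neg_one_pow_mul_of_rowB_eq_zero : ∀ m < k, x m = (-1) ^ m * x 0 :=
  eq_neg_one_pow_mul_of_add_eq_zero (add_eq_zero_of_rowB_eq_zero hx)

theorem rowB_zero_of_rowB_eq_zero (hk : Even k) : rowB k 0 x = x k := by
  rw [rowB_zero, sum_range_succ,
    sum_range_eq_zero_of_add_eq_zero hk (add_eq_zero_of_rowB_eq_zero hx), zero_add]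

theorem rowB_self_of_rowB_eq_zero (hk : Even k) (hk0 : 0 < k) : rowB k k x = x k - x 0 := by
  obtain ⟨j, rfl⟩ : ∃ j, k = j + 1 := ⟨k - 1, by omega⟩
  have hj : Odd j := by simpa [Nat.even_add_one] using hk
  rw [rowB_succ (by omega), eq_neg_one_pow_mul_of_rowB_eq_zero hx j (by omega), hj.neg_one_pow,
    neg_one_mul, sub_eq_add_neg]

end RowB

variable (R) in
/-- The paper's `B^k`, with rows and columns numbered from `0`. -/
def matB (k : ℕ) : Matrix (Fin (k + 1)) (Fin (k + 1)) R :=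
  Matrix.of fun a b => if a.val = b.val ∨ a.val = 0 ∨ a.val = b.val + 1 then 1 else 0

theorem mulVec_matB_apply {k : ℕ} (v : Fin (k + 1) → R) (j : Fin (k + 1)) :
    (matB R k *ᵥ v) j = rowB k j (zeroExtend v) := by
  simp only [Matrix.mulVec, dotProduct, matB, Matrix.of_apply, boole_mul, rowB]
  rw [← Fin.sum_univ_eq_sum_range
    (fun m => if j.val = m ∨ j.val = 0 ∨ j.val = m + 1 then zeroExtend v m else 0)]
  simp only [zeroExtend_val]

theorem isUnit_matB {K : Type*} [Field K] {k : ℕ} (hk : Even k) (hk0 : 0 < k) :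
    IsUnit (matB K k) := by
  rw [Matrix.isUnit_iff_isUnit_det, isUnit_iff_ne_zero]
  intro hdet
  obtain ⟨v, hv0, hv⟩ := Matrix.exists_mulVec_eq_zero_iff.2 hdet
  have hrow : ∀ j ≤ k, rowB k j (zeroExtend v) = 0 := fun j hj => by
    simpa [mulVec_matB_apply] using congrFun hv ⟨j, by omega⟩
  have hint : ∀ j, 0 < j → j < k → rowB k j (zeroExtend v) = 0 := fun j _ hj => hrow j hj.le
  have hlast : zeroExtend v k = 0 := by
    rw [← rowB_zero_of_rowB_eq_zero hint hk, hrow 0 (Nat.zero_le _)]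
  have hfirst : zeroExtend v 0 = 0 := by
    have := rowB_self_of_rowB_eq_zero hint hk hk0
    rwa [hrow k le_rfl, hlast, zero_sub, zero_eq_neg] at this
  refine hv0 (funext fun i => ?_)
  rw [Pi.zero_apply, ← zeroExtend_val v i]
  rcases (Nat.lt_succ_iff.1 i.isLt).lt_or_eq with hi | hi
  · rw [eq_neg_one_pow_mul_of_rowB_eq_zero hint i hi, hfirst, mul_zero]
  · rw [hi, hlast]

variable (R) in
/-- Entry `(r, n)` of the paper's `A`, numbering rows and columns from `0`: column
`(k + 1) * q + m` is column `m` of `B^k`, moved down to the rows `q * k, …, q * k + k`. -/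
def entryA (k r n : ℕ) : R :=
  if n / (k + 1) * k ≤ r ∧ r ≤ n / (k + 1) * k + k ∧
    (r - n / (k + 1) * k = n % (k + 1) ∨ r - n / (k + 1) * k = 0 ∨
     r - n / (k + 1) * k = n % (k + 1) + 1)
  then 1 else 0

variable (R) in
def matA (k t : ℕ) : Matrix (Fin (k * t + 1)) (Fin ((k + 1) * t)) R :=
  Matrix.of fun r c => entryA R k r c

def block (k q : ℕ) (w : ℕ → R) (m : ℕ) : R := w ((k + 1) * q + m)

section MatA

variable {k t : ℕ}

theorem entryA_mul_add (r q : ℕ) {m : ℕ} (hm : m < k + 1) :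
    entryA R k r ((k + 1) * q + m) =
      if q * k ≤ r ∧ r ≤ q * k + k ∧ (r - q * k = m ∨ r - q * k = 0 ∨ r - q * k = m + 1)
      then 1 else 0 := by
  rw [entryA, Nat.mul_add_div (by omega), Nat.div_eq_of_lt hm, add_zero, Nat.mul_add_mod,
    Nat.mod_eq_of_lt hm]

theorem mulVec_matA_apply (z : Fin ((k + 1) * t) → R) (r : Fin (k * t + 1)) :
    (matA R k t *ᵥ z) r = ∑ q ∈ range t,
      if q * k ≤ r ∧ r.val ≤ q * k + k then rowB k (r - q * k) (block k q (zeroExtend z))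
      else 0 := by
  have hsum := Fin.sum_univ_eq_sum_range (fun n => entryA R k r n * zeroExtend z n) ((k + 1) * t)
  simp only [zeroExtend_val] at hsum
  rw [Matrix.mulVec, dotProduct]
  simp only [matA, Matrix.of_apply]
  rw [hsum, sum_range_mul_eq]
  refine sum_congr rfl fun q _ => ?_
  split_ifs with hq
  · refine sum_congr rfl fun m hm => ?_
    simp only [entryA_mul_add _ _ (mem_range.1 hm), boole_mul, hq, true_and, block]
  · refine sum_eq_zero fun m hm => ?_
    rw [entryA_mul_add _ _ (mem_range.1 hm), if_neg fun h => hq ⟨h.1, h.2.1⟩, zero_mul]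

theorem eq_or_succ_eq_of_mul_le (hk0 : 0 < k) {q q' j : ℕ} (hj : j < k) (h1 : q' * k ≤ q * k + j)
    (h2 : q * k + j ≤ q' * k + k) : q' = q ∨ (j = 0 ∧ q' + 1 = q) := by
  have hq' : q' < q + 1 := Nat.lt_of_mul_lt_mul_right (a := k) (by rw [add_one_mul]; omega)
  have hq : q ≤ q' + 1 := Nat.le_of_mul_le_mul_right (by rw [add_one_mul]; omega) hk0
  rcases (Nat.lt_succ_iff.1 hq').lt_or_eq with hlt | rfl
  · obtain rfl : q = q' + 1 := by omega
    rw [add_one_mul] at h2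
    omega
  · exact Or.inl rfl

theorem block_zeroExtend_of_le (z : Fin ((k + 1) * t) → R) {q : ℕ} (hq : t ≤ q) :
    block k q (zeroExtend z) = 0 :=
  funext fun m => zeroExtend_of_le z (by nlinarith)

theorem eq_zero_of_block_eq_zero {z : Fin ((k + 1) * t) → R}
    (h : ∀ q < t, ∀ m ≤ k, block k q (zeroExtend z) m = 0) : z = 0 := by
  funext c
  have hc := h (c / (k + 1)) (Nat.div_lt_of_lt_mul c.isLt) (c % (k + 1))
    (Nat.lt_succ_iff.1 (Nat.mod_lt _ k.succ_pos))
  rwa [block, Nat.div_add_mod, zeroExtend_val] at hc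

variable {z : Fin ((k + 1) * t) → R} (hk0 : 0 < k) (hz : matA R k t *ᵥ z = 0)
include hk0 hz

theorem rowB_block_eq_zero (q j : ℕ) (hj0 : 0 < j) (hjk : j < k) :
    rowB k j (block k q (zeroExtend z)) = 0 := by
  rcases lt_or_ge q t with hq | hq
  · have hr : q * k + j < k * t + 1 := by nlinarith
    have h := congrFun hz ⟨q * k + j, hr⟩
    rw [mulVec_matA_apply] at h
    dsimp only at h
    rw [sum_eq_single_of_mem q (mem_range.2 hq), if_pos (by constructor <;> omega),
      Nat.add_sub_cancel_left] at h
    · exact h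
    · refine fun q' _ hq' => if_neg fun h => ?_
      rcases eq_or_succ_eq_of_mul_le hk0 hjk h.1 h.2 with h | h <;> omega
  · rw [block_zeroExtend_of_le z hq, rowB_zero_right]

theorem rowB_zero_block_zero : rowB k 0 (block k 0 (zeroExtend z)) = 0 := by
  rcases Nat.eq_zero_or_pos t with rfl | ht
  · rw [block_zeroExtend_of_le z le_rfl, rowB_zero_right]
  · have h := congrFun hz ⟨0, by omega⟩
    rw [mulVec_matA_apply, sum_eq_single_of_mem 0 (mem_range.2 ht), if_pos (by simp)] at h
    · simpa using h
    · exact fun q' _ hq' => if_neg fun h => hq' (by simpa [hk0.ne'] using h.1)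

theorem rowB_self_add_rowB_zero {q : ℕ} (hq : q < t) :
    rowB k k (block k q (zeroExtend z)) + rowB k 0 (block k (q + 1) (zeroExtend z)) = 0 := by
  have hr : (q + 1) * k < k * t + 1 := by nlinarith
  have h := congrFun hz ⟨(q + 1) * k, hr⟩
  rw [mulVec_matA_apply] at h
  dsimp only at h
  rw [sum_eq_add q (q + 1) (by omega)] at h
  · simp only [add_one_mul, Pi.zero_apply] at h
    rwa [if_pos (by omega), if_pos (by omega), Nat.add_sub_cancel_left, Nat.sub_self] at h
  · refine fun q' _ hq' => if_neg fun h => ?_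
    rcases eq_or_succ_eq_of_mul_le (q := q + 1) (j := 0) hk0 hk0 h.1 h.2 with h | h <;> omega
  · exact fun h => absurd (mem_range.2 hq) h
  · intro h
    rw [block_zeroExtend_of_le z (by simpa using h), rowB_zero_right, ite_self]

end MatA

theorem two_mul_add_one_le_ncard_of_block_ne_zero {k : ℕ} {w : ℕ → R}
    (hw : {n | w n ≠ 0}.Finite) {i i' j : ℕ} (hii' : i ≠ i') (hi : ∀ m < k, block k i w m ≠ 0)
    (hi' : ∀ m < k, block k i' w m ≠ 0) (hj : block k j w k ≠ 0) : 2 * k + 1 ≤ {n | w n ≠ 0}.ncard := by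
  let s : Finset (ℕ × ℕ) := {i, i'} ×ˢ range k ∪ {(j, k)}
  have hcard : s.card = 2 * k + 1 := by
    rw [card_union_of_disjoint (by simp), card_product, card_pair hii', card_range, card_singleton]
  have hmem : ∀ p ∈ s, p.2 < k + 1 ∧ block k p.1 w p.2 ≠ 0 := by
    rintro ⟨q, m⟩ hp
    simp only [s, mem_union, mem_product, mem_insert, mem_singleton, mem_range,
      Prod.mk.injEq] at hp
    rcases hp with ⟨rfl | rfl, hm⟩ | ⟨rfl, rfl⟩
    · exact ⟨by omega, hi m hm⟩
    · exact ⟨by omega, hi' m hm⟩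
    · exact ⟨by omega, hj⟩
  have hinj : Set.InjOn (fun p : ℕ × ℕ => (k + 1) * p.1 + p.2) s := by
    refine Set.LeftInvOn.injOn (f₁' := fun n => (n / (k + 1), n % (k + 1))) fun p hp => ?_
    have hp2 := (hmem p hp).1
    simp [Nat.mul_add_div, Nat.div_eq_of_lt hp2, Nat.mod_eq_of_lt hp2]
  have hsub : ↑(s.image fun p => (k + 1) * p.1 + p.2) ⊆ {n | w n ≠ 0} := by
    rw [coe_image]
    rintro _ ⟨p, hp, rfl⟩
    exact (hmem p hp).2
  calc 2 * k + 1 = (s.image fun p => (k + 1) * p.1 + p.2).card :=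
        ((card_image_of_injOn hinj).trans hcard).symm
    _ ≤ {n | w n ≠ 0}.ncard := by
      rw [← Set.ncard_coe_finset]
      exact Set.ncard_le_ncard hsub hw

theorem two_mul_add_one_le_ncard_of_mulVec_matA_eq_zero {k t : ℕ} (hk : Even k) (hk0 : 0 < k)
    {z : Fin ((k + 1) * t) → R} (hz0 : z ≠ 0) (hz : matA R k t *ᵥ z = 0) :
    2 * k + 1 ≤ {j | z j ≠ 0}.ncard := by
  set w := zeroExtend z
  have hint (q : ℕ) := rowB_block_eq_zero hk0 hz q
  have halt (q : ℕ) := eq_neg_one_pow_mul_of_rowB_eq_zero (hint q)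
  have hab : ∀ q < t, block k q w 0 = block k q w k + block k (q + 1) w k := fun q hq => by
    have h := rowB_self_add_rowB_zero hk0 hz hq
    rwa [rowB_self_of_rowB_eq_zero (hint q) hk hk0, rowB_zero_of_rowB_eq_zero (hint (q + 1)) hk,
      sub_add_eq_add_sub, sub_eq_zero, eq_comm] at h
  have h0 : block k 0 w k = 0 := by
    rw [← rowB_zero_of_rowB_eq_zero (hint 0) hk]
    exact rowB_zero_block_zero hk0 hz
  have ht : block k t w k = 0 := by rw [block_zeroExtend_of_le z le_rfl, Pi.zero_apply]
  have hne {q : ℕ} (hq : block k q w 0 ≠ 0) : ∀ m < k, block k q w m ≠ 0 := fun m hm h =>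
    hq (((isUnit_neg_one (α := R)).pow m).mul_right_eq_zero.1 (halt q m hm ▸ h))
  obtain ⟨i, hi, hai⟩ : ∃ i < t, block k i w 0 ≠ 0 := by
    by_contra! ha
    have hb := forall_eq_zero_of_eq_add_succ hab h0 ha
    refine hz0 (eq_zero_of_block_eq_zero fun q hq m hm => ?_)
    rcases hm.lt_or_eq with hm | rfl
    · rw [halt q m hm, ha q hq, mul_zero]
    · exact hb q hq.le
  obtain ⟨i', -, hi'i, hai'⟩ := exists_ne_ne_zero_of_eq_add_succ hab h0 ht hi hai
  obtain ⟨j, hj⟩ : ∃ j, block k j w k ≠ 0 := by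
    by_contra! hb
    exact hai (by rw [hab i hi, hb, hb, add_zero])
  have hfin : {n | w n ≠ 0}.Finite := setOf_zeroExtend_ne_zero z ▸ (Set.toFinite _).image _
  rw [← Set.ncard_image_of_injective _ Fin.val_injective, ← setOf_zeroExtend_ne_zero]
  exact two_mul_add_one_le_ncard_of_block_ne_zero hfin hi'i.symm (hne hai) (hne hai') hj

theorem stmt_16_general (k t : ℕ) (hk : 2 ≤ k) (hkeven : Even k)
    (B : Matrix (Fin (k + 1)) (Fin (k + 1)) ℝ)
    (hB : ∀ a b, B a b =
      if a.val = b.val ∨ a.val = 0 ∨ a.val = b.val + 1 then 1 else 0)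
    (A : Matrix (Fin (k * t + 1)) (Fin ((k + 1) * t)) ℝ)
    (hA : ∀ r c, A r c =
      if c.val / (k + 1) * k ≤ r.val ∧ r.val ≤ c.val / (k + 1) * k + k ∧
        (r.val - c.val / (k + 1) * k = c.val % (k + 1) ∨
         r.val - c.val / (k + 1) * k = 0 ∨
         r.val - c.val / (k + 1) * k = c.val % (k + 1) + 1)
      then 1 else 0) :
    IsUnit B ∧
    ∀ z : Fin ((k + 1) * t) → ℝ, z ≠ 0 → A.mulVec z = 0 →
      2 * k + 1 ≤ {j | z j ≠ 0}.ncard := by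
  obtain rfl : B = matB ℝ k := Matrix.ext hB
  obtain rfl : A = matA ℝ k t := Matrix.ext hA
  exact ⟨isUnit_matB hkeven (by omega), fun z hz0 hz =>
    two_mul_add_one_le_ncard_of_mulVec_matA_eq_zero hkeven (by omega) hz0 hz⟩

/-- The `(k+1) × (k+1)` matrix `B^k` (ones on the diagonal, the first row, and
the subdiagonal, for even `k ≥ 2`) is invertible, and the `(kt+1) × (k+1)t`
block matrix `A` built from overlapping copies of `B^k` has the property that
every nonzero null vector has at least `2k+1` nonzero entries. -/
theorem stmt_16 (k t : ℕ) (hk : 2 ≤ k) (hkeven : Even k) (ht : 2 ≤ t)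
    (B : Matrix (Fin (k + 1)) (Fin (k + 1)) ℝ)
    (hB : ∀ a b, B a b =
      if a.val = b.val ∨ a.val = 0 ∨ a.val = b.val + 1 then 1 else 0)
    (A : Matrix (Fin (k * t + 1)) (Fin ((k + 1) * t)) ℝ)
    (hA : ∀ r c, A r c =
      if c.val / (k + 1) * k ≤ r.val ∧ r.val ≤ c.val / (k + 1) * k + k ∧
        (r.val - c.val / (k + 1) * k = c.val % (k + 1) ∨
         r.val - c.val / (k + 1) * k = 0 ∨
         r.val - c.val / (k + 1) * k = c.val % (k + 1) + 1)
      then 1 else 0) :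
    IsUnit B ∧
    ∀ z : Fin ((k + 1) * t) → ℝ, z ≠ 0 → A.mulVec z = 0 →
      2 * k + 1 ≤ {j | z j ≠ 0}.ncard :=
  stmt_16_general k t hk hkeven B hB A hA
end

section
/- Let G be a connected graph with radius R (R = min over u of max over v of the graph distance d(u,v)). Suppose there is a procedure that, given any graph on s nodes, recovers k-sparse vectors with f(k,s) measurements when arbitrary subsets can be measured. Then the iterative leaf-stripping algorithm (repeatedly: root a BFS spanning tree at a center node, measure the leaf set using the non-leaf nodes as a hub with f(k,n)+1 measurements, then contract the leaves) terminates after at most R iterations, producing at most R·f(k,n) + R + 1 measurements, each supported on a connected induced subgraph of G, that identify all k-sparse vectors on G. -/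
/-!
Let `u` be a center, so every vertex lies within distance `R` of `u`. For `i < R` the ball of
radius `i` around `u` is connected and every vertex of the sphere of radius `i + 1` has a
neighbour in it, so adding to the ball any set of vertices of that sphere keeps it connected.
Measuring the ball, and the ball together with the part of the sphere selected by each row of a
complete-graph measurement matrix `B`, the differences are the `B`-measurements of `x` restricted
to the sphere, which determine that restriction for `k`-sparse `x`. Together with the
measurement of `{u}` this gives `(R + 1) + R · f(k, n)` measurements.
-/

namespace SimpleGraph

variable {V : Type*} {G : SimpleGraph V}

theorem Walk.dist_add_dist_le_length {u v w : V} (p : G.Walk u v) (hw : w ∈ p.support) :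
    G.dist u w + G.dist w v ≤ p.length := by
  classical
  rw [← p.take_spec hw, Walk.length_append]
  exact add_le_add (dist_le _) (dist_le _)

theorem Connected.induce_connected_between_balls (hG : G.Connected) {u : V} {i : ℕ}
    {T : Set V} (hball : {v | G.dist u v ≤ i} ⊆ T) (hT : T ⊆ {v | G.dist u v ≤ i + 1}) :
    (G.induce T).Connected := by
  refine induce_connected_of_patches u (hball (by simp)) fun {v} hv => ?_
  obtain ⟨p, hp⟩ := hG.exists_walk_length_eq_dist u v
  refine ⟨{w | w ∈ p.support}, fun w hw => ?_, p.start_mem_support, p.end_mem_support,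
    p.connected_induce_support _ _⟩
  by_cases hwv : w = v
  · exact hwv ▸ hv
  have hsum := p.dist_add_dist_le_length hw
  have hpos := hG.pos_dist_of_ne hwv
  have hvi : G.dist u v ≤ i + 1 := hT hv
  exact hball (show G.dist u w ≤ i by omega)

end SimpleGraph

namespace Matrix

variable {ι κ V W K : Type*} [Ring K]

def IdentifiesSparse [Fintype V] (k : ℕ) (A : Matrix ι V K) : Prop :=
  ∀ x₁ x₂ : V → K, {j | x₁ j ≠ 0}.ncard ≤ k → {j | x₂ j ≠ 0}.ncard ≤ k →
    A *ᵥ x₁ = A *ᵥ x₂ → x₁ = x₂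

theorem IdentifiesSparse.submatrix [Fintype V] [Fintype W] {k : ℕ} {A : Matrix ι V K}
    (hA : A.IdentifiesSparse k) {σ : κ → ι} (hσ : σ.Surjective) (e : W ≃ V) :
    (A.submatrix σ e).IdentifiesSparse k := by
  have hsparse : ∀ x : W → K, {j | (x ∘ e.symm) j ≠ 0}.ncard = {j | x j ≠ 0}.ncard :=
    fun x => Set.ncard_preimage_of_injective_subset_range (s := {j | x j ≠ 0}) e.symm.injective
      (by simp)
  intro x₁ x₂ h₁ h₂ h
  rw [submatrix_mulVec_equiv, submatrix_mulVec_equiv] at h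
  exact e.symm.surjective.injective_comp_right
    (hA _ _ (hsparse x₁ ▸ h₁) (hsparse x₂ ▸ h₂) (hσ.injective_comp_right h))

theorem IdentifiesSparse.eqOn_of_mulVec_indicator_eq [Fintype V] {k : ℕ} {B : Matrix ι V K}
    (hB : B.IdentifiesSparse k) (L : Set V) {x₁ x₂ : V → K}
    (h₁ : {j | x₁ j ≠ 0}.ncard ≤ k) (h₂ : {j | x₂ j ≠ 0}.ncard ≤ k)
    (h : B *ᵥ L.indicator x₁ = B *ᵥ L.indicator x₂) : Set.EqOn x₁ x₂ L := by
  have hsparse : ∀ x : V → K, {j | L.indicator x j ≠ 0}.ncard ≤ {j | x j ≠ 0}.ncard :=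
    fun x => by
      change (Function.support (L.indicator x)).ncard ≤ (Function.support x).ncard
      rw [Set.support_indicator]
      exact Set.ncard_inter_le_ncard_right _ _
  intro v hv
  simpa [Set.indicator_of_mem hv] using
    congrFun (hB _ _ ((hsparse x₁).trans h₁) ((hsparse x₂).trans h₂) h) v

noncomputable def ofIndicators (S : ι → Set V) : Matrix ι V K :=
  of fun a => (S a).indicator 1

theorem ofIndicators_apply_eq_zero_or_one (S : ι → Set V) (a : ι) (v : V) :
    ofIndicators (K := K) S a v = 0 ∨ ofIndicators (K := K) S a v = 1 := by
  by_cases hv : v ∈ S a <;> simp [ofIndicators, hv]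

theorem setOf_ofIndicators_eq_one [Nontrivial K] (S : ι → Set V) (a : ι) :
    {v | ofIndicators (K := K) S a v = 1} = S a := by
  ext v; by_cases hv : v ∈ S a <;> simp [ofIndicators, hv]

theorem ofIndicators_mulVec [Fintype V] (S : ι → Set V) (x : V → K) (a : ι) :
    (ofIndicators S *ᵥ x) a = ∑ v, (S a).indicator x v := by
  simp [ofIndicators, mulVec, dotProduct, ← Set.indicator_mul_left]

theorem sum_indicator_union_inter_sub [Fintype V] {B : Matrix ι V K}
    (hB : ∀ r v, B r v = 0 ∨ B r v = 1) {H L : Set V} (hHL : Disjoint H L) (x : V → K)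
    (r : ι) :
    ∑ v, (H ∪ L ∩ {v | B r v = 1}).indicator x v - ∑ v, H.indicator x v =
      (B *ᵥ L.indicator x) r := by
  rw [Set.indicator_union_of_disjoint (hHL.mono_right Set.inter_subset_left),
    Finset.sum_add_distrib, add_sub_cancel_left]
  refine Finset.sum_congr rfl fun v _ => ?_
  rcases hB r v with hr | hr <;> by_cases hv : v ∈ L <;> simp [hr, hv]
  exact fun h => by rw [← one_mul (x v), ← h, zero_mul]

end Matrix

namespace SimpleGraph

open Matrix

variable {V ι K : Type*} (G : SimpleGraph V) (u : V) (R : ℕ)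

/-- The ball of radius `i` is the hub of the paper: the non-leaf part of a BFS tree of depth
`i + 1` rooted at `u`, whose leaves form the sphere of radius `i + 1`. -/
def layeredSupports [One K] (B : Matrix ι V K) : Fin (R + 1) ⊕ Fin R × ι → Set V
  | .inl j => {v | G.dist u v ≤ j}
  | .inr (i, r) => {v | G.dist u v ≤ i} ∪ {v | G.dist u v = i + 1} ∩ {v | B r v = 1}

variable {G}

theorem Connected.induce_connected_layeredSupports [One K] (hG : G.Connected)
    (B : Matrix ι V K) (a : Fin (R + 1) ⊕ Fin R × ι) :
    (G.induce (G.layeredSupports u R B a)).Connected := by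
  rcases a with j | ⟨i, r⟩
  · exact hG.induce_connected_between_balls le_rfl fun v (hv : G.dist u v ≤ j) => by
      simp only [Set.mem_ofPred_eq]; omega
  · refine hG.induce_connected_between_balls Set.subset_union_left ?_
    rintro v (hv | ⟨hv, -⟩) <;> simp only [Set.mem_ofPred_eq] at hv ⊢ <;> omega

theorem mulVec_indicator_setOf_dist_eq_succ [Fintype V] [Ring K] {B : Matrix ι V K}
    (hB : ∀ r v, B r v = 0 ∨ B r v = 1) (i : Fin R) (r : ι) (x : V → K) :
    (B *ᵥ {v | G.dist u v = i + 1}.indicator x) r =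
      (ofIndicators (G.layeredSupports u R B) *ᵥ x) (.inr (i, r)) -
        (ofIndicators (G.layeredSupports u R B) *ᵥ x) (.inl i.castSucc) := by
  have hdisj : Disjoint {v | G.dist u v ≤ i} {v | G.dist u v = i + 1} :=
    Set.disjoint_left.2 fun v (h : G.dist u v ≤ i) (h' : G.dist u v = i + 1) => by omega
  rw [ofIndicators_mulVec, ofIndicators_mulVec]
  exact (sum_indicator_union_inter_sub hB hdisj x r).symm

theorem Connected.identifiesSparse_ofIndicators_layeredSupports [Fintype V] [Ring K]
    (hG : G.Connected) (hecc : ∀ v, G.dist u v ≤ R) {k : ℕ} {B : Matrix ι V K}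
    (hB01 : ∀ r v, B r v = 0 ∨ B r v = 1) (hB : B.IdentifiesSparse k) :
    (ofIndicators (K := K) (G.layeredSupports u R B)).IdentifiesSparse k := by
  intro x₁ x₂ h₁ h₂ hx
  have hcenter : x₁ u = x₂ u := by
    classical
    have hball : G.layeredSupports u R B (.inl 0) = {u} := by
      ext; simp [layeredSupports, hG.dist_eq_zero_iff, eq_comm]
    simpa [ofIndicators_mulVec, hball, Set.indicator_singleton, Finset.sum_pi_single'] using
      congrFun hx (.inl 0)
  have hlayer (i : Fin R) : Set.EqOn x₁ x₂ {v | G.dist u v = i + 1} :=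
    hB.eqOn_of_mulVec_indicator_eq _ h₁ h₂ <| funext fun r => by
      simp only [mulVec_indicator_setOf_dist_eq_succ u R hB01, hx]
  funext v
  rcases h : G.dist u v with _ | i
  · exact hG.dist_eq_zero_iff.1 h ▸ hcenter
  · exact hlayer ⟨i, by have := hecc v; omega⟩ h

end SimpleGraph

theorem stmt_18_general {V : Type*} [Fintype V]
    (G : SimpleGraph V) (hconn : G.Connected) (R k : ℕ)
    (hR1 : ∃ u : V, Finset.univ.sup (fun v => G.dist u v) = R)
    (f : ℕ → ℕ → ℕ)
    (hf : ∀ s : ℕ, ∃ B : Matrix (Fin (f k s)) (Fin s) ℝ,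
      (∀ a b, B a b = 0 ∨ B a b = 1) ∧
      ∀ x₁ x₂ : Fin s → ℝ, {j | x₁ j ≠ 0}.ncard ≤ k → {j | x₂ j ≠ 0}.ncard ≤ k →
        B.mulVec x₁ = B.mulVec x₂ → x₁ = x₂) :
    ∃ m, m ≤ R * f k (Fintype.card V) + R + 1 ∧
      ∃ A : Matrix (Fin m) V ℝ,
        (∀ a j, A a j = 0 ∨ A a j = 1) ∧
        (∀ a, (G.induce {j | A a j = 1}).Connected) ∧
        (∀ x₁ x₂ : V → ℝ, {j | x₁ j ≠ 0}.ncard ≤ k → {j | x₂ j ≠ 0}.ncard ≤ k →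
          A.mulVec x₁ = A.mulVec x₂ → x₁ = x₂) := by
  obtain ⟨u, hu⟩ := hR1
  have hecc (v : V) : G.dist u v ≤ R :=
    hu ▸ Finset.le_sup (f := (G.dist u ·)) (Finset.mem_univ v)
  obtain ⟨B, hB01, hB⟩ := hf (Fintype.card V)
  set B' := B.submatrix id (Fintype.equivFin V)
  have hB' : B'.IdentifiesSparse k :=
    Matrix.IdentifiesSparse.submatrix hB Function.surjective_id _
  set S := G.layeredSupports u R B'
  set σ := (Fintype.equivFin (Fin (R + 1) ⊕ Fin R × Fin (f k (Fintype.card V)))).symm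
  refine ⟨_, ?_, (Matrix.ofIndicators S).submatrix σ id,
    fun a j => Matrix.ofIndicators_apply_eq_zero_or_one _ _ _,
    fun a => ?_, (hconn.identifiesSparse_ofIndicators_layeredSupports u R hecc
      (fun r v => hB01 _ _) hB').submatrix σ.surjective (Equiv.refl V)⟩
  · simp only [Fintype.card_sum, Fintype.card_prod, Fintype.card_fin]
    lia
  · change (G.induce {j | Matrix.ofIndicators S (σ a) j = 1}).Connected
    rw [Matrix.setOf_ofIndicators_eq_one]
    exact hconn.induce_connected_layeredSupports u R B' (σ a)

/-- Guarantee of the iterative leaf-stripping measurement construction on a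
connected graph of radius `R`: given, for every size `s`, a 0-1 measurement
matrix with `f k s` rows identifying `k`-sparse vectors (complete-graph case,
`f` monotone in `s`), there exists a feasible (connected-support) 0-1
measurement scheme on `G` with at most `R·f(k,n) + R + 1` measurements that
identifies all `k`-sparse vectors on `G`. -/
theorem stmt_18 {V : Type*} [Fintype V] [DecidableEq V] [Nonempty V]
    (G : SimpleGraph V) (hconn : G.Connected) (R k : ℕ)
    (hR1 : ∃ u : V, Finset.univ.sup (fun v => G.dist u v) = R)
    (hR2 : ∀ u : V, R ≤ Finset.univ.sup (fun v => G.dist u v))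
    (f : ℕ → ℕ → ℕ) (hmono : ∀ s s' : ℕ, s ≤ s' → f k s ≤ f k s')
    (hf : ∀ s : ℕ, ∃ B : Matrix (Fin (f k s)) (Fin s) ℝ,
      (∀ a b, B a b = 0 ∨ B a b = 1) ∧
      ∀ x₁ x₂ : Fin s → ℝ, {j | x₁ j ≠ 0}.ncard ≤ k → {j | x₂ j ≠ 0}.ncard ≤ k →
        B.mulVec x₁ = B.mulVec x₂ → x₁ = x₂) :
    ∃ m, m ≤ R * f k (Fintype.card V) + R + 1 ∧
      ∃ A : Matrix (Fin m) V ℝ,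
        (∀ a j, A a j = 0 ∨ A a j = 1) ∧
        (∀ a, (G.induce {j | A a j = 1}).Connected) ∧
        (∀ x₁ x₂ : V → ℝ, {j | x₁ j ≠ 0}.ncard ≤ k → {j | x₂ j ≠ 0}.ncard ≤ k →
          A.mulVec x₁ = A.mulVec x₂ → x₁ = x₂) :=
  stmt_18_general G hconn R k hR1 f hf
end
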